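/- arXiv:2603.21452 — 11 statements merged into one kernel-verified Lean document; each statement's English description precedes it below -/
import Mathlib

section
/- For every point p of X (i.e., every p ∈ ℝ^{m+1} with F(p) = 0), the Fréchet derivative of F at p is a nonzero linear map from ℝ^{m+1} to ℝ (equivalently, it is surjective). Consequently, by the implicit function theorem, X is an m-dimensional smooth submanifold of ℝ^{m+1} with no boundary. -/
/-- For every point `p` of `X = F⁻¹(0)`, the Fréchet derivative of `F` at `p`
is a nonzero linear map from `ℝ^{m+1}` to `ℝ`, equivalently it is surjective. -/
theorem stmt0 (m : ℕ) (hm : 2 ≤ m) (c₁ c₂ : ℝ → ℝ)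
    (hc₁ : ContDiff ℝ (⊤ : ℕ∞) c₁) (hc₂ : ContDiff ℝ (⊤ : ℕ∞) c₂)
    (hlt : ∀ x : ℝ, c₁ x < c₂ x)
    (F : ℝ × ℝ × (Fin (m - 1) → ℝ) → ℝ)
    (hF : ∀ x₁ x₂ : ℝ, ∀ y : Fin (m - 1) → ℝ,
      F (x₁, x₂, y) = (x₁ - c₁ x₂) * (c₂ x₂ - x₁) - ∑ j, (y j) ^ 2)
    (p : ℝ × ℝ × (Fin (m - 1) → ℝ)) (hp : F p = 0) :
    fderiv ℝ F p ≠ 0 ∧ Function.Surjective (fderiv ℝ F p) := by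
  have hFeq : F = fun q : ℝ × ℝ × (Fin (m - 1) → ℝ) =>
      (q.1 - c₁ q.2.1) * (c₂ q.2.1 - q.1) - ∑ j, (q.2.2 j) ^ 2 := by
    funext q; exact hF q.1 q.2.1 q.2.2
  subst hFeq
  obtain ⟨x₁, x₂, y⟩ := p
  have hc1d : Differentiable ℝ c₁ := hc₁.differentiable (by simp)
  have hc2d : Differentiable ℝ c₂ := hc₂.differentiable (by simp)
  set G : ℝ × ℝ × (Fin (m - 1) → ℝ) → ℝ := fun q =>
      (q.1 - c₁ q.2.1) * (c₂ q.2.1 - q.1) - ∑ j, (q.2.2 j) ^ 2 with hG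
  have hdiff : DifferentiableAt ℝ G (x₁, x₂, y) := by rw [hG]; fun_prop
  suffices h : ∃ v, fderiv ℝ G (x₁, x₂, y) v ≠ 0 by
    obtain ⟨v, hv⟩ := h
    refine ⟨fun h0 => hv (by rw [h0]; simp), fun z => ?_⟩
    exact ⟨(z / fderiv ℝ G (x₁, x₂, y) v) • v,
      by rw [map_smul, smul_eq_mul, div_mul_cancel₀ _ hv]⟩
  -- directional derivative helper
  have key : ∀ (γ : ℝ → ℝ × ℝ × (Fin (m - 1) → ℝ)) (v : ℝ × ℝ × (Fin (m - 1) → ℝ)),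
      γ 0 = (x₁, x₂, y) → HasDerivAt γ v 0 →
      HasDerivAt (fun t => G (γ t)) (fderiv ℝ G (x₁, x₂, y) v) 0 := by
    intro γ v h0 hγ
    have hfd : HasFDerivAt G (fderiv ℝ G (x₁, x₂, y)) (γ 0) := by
      rw [h0]; exact hdiff.hasFDerivAt
    exact hfd.comp_hasDerivAt 0 hγ
  by_cases hy : ∃ j, y j ≠ 0
  · obtain ⟨j, hj⟩ := hy
    refine ⟨(0, 0, Pi.single j 1), ?_⟩
    set v : ℝ × ℝ × (Fin (m - 1) → ℝ) := (0, 0, (Pi.single j 1 : Fin (m-1) → ℝ))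
    have hγ : HasDerivAt (fun t : ℝ => ((x₁ : ℝ), (x₂ : ℝ), y + t • (Pi.single j 1 : Fin (m-1) → ℝ))) v 0 := by
      refine ((hasDerivAt_const 0 x₁).prodMk ((hasDerivAt_const 0 x₂).prodMk ?_))
      simpa using ((hasDerivAt_id (0:ℝ)).smul_const ((Pi.single j 1 : Fin (m-1) → ℝ))).const_add y
    have h1 := key _ v (by simp) hγ
    -- explicit derivative of the same curve
    have h2 : HasDerivAt (fun t : ℝ => G (x₁, x₂, y + t • (Pi.single j 1 : Fin (m-1) → ℝ)))
        (-(2 * y j)) 0 := by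
      have hsum : HasDerivAt (fun t : ℝ => ∑ i, (y i + t * (Pi.single j 1 : Fin (m-1) → ℝ) i) ^ 2)
          (2 * y j) 0 := by
        have : ∀ i ∈ Finset.univ, HasDerivAt (fun t : ℝ => (y i + t * (Pi.single j 1 : Fin (m-1) → ℝ) i) ^ 2)
            (2 * y i * (Pi.single j 1 : Fin (m-1) → ℝ) i) 0 := by
          intro i _
          have hb : HasDerivAt (fun t : ℝ => y i + t * (Pi.single j 1 : Fin (m-1) → ℝ) i)
              ((Pi.single j 1 : Fin (m-1) → ℝ) i) 0 := by
            simpa using ((hasDerivAt_id (0:ℝ)).mul_const ((Pi.single j 1 : Fin (m-1) → ℝ) i)).const_add (y i)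
          have := hb.fun_pow 2
          simpa [mul_comm, mul_assoc, mul_left_comm] using this
        have hs := HasDerivAt.fun_sum this
        have : (∑ i, 2 * y i * (Pi.single j 1 : Fin (m-1) → ℝ) i) = 2 * y j := by
          rw [Finset.sum_eq_single j] <;> simp +contextual [Pi.single_apply]
        rwa [this] at hs
      have := (hasDerivAt_const (0:ℝ) ((x₁ - c₁ x₂) * (c₂ x₂ - x₁))).fun_sub hsum
      simpa [hG, Pi.add_apply, smul_eq_mul] using this
    have heq : fderiv ℝ G (x₁, x₂, y) v = -(2 * y j) := by
      exact h1.unique h2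
    rw [heq]
    simpa using hj
  · push_neg at hy
    have hy0 : ∑ j, (y j) ^ 2 = 0 := by simp [hy]
    have hp' : (x₁ - c₁ x₂) * (c₂ x₂ - x₁) = 0 := by
      have := hp
      simp only [hG] at this
      rw [hy0] at this; linarith
    refine ⟨(1, 0, 0), ?_⟩
    set v : ℝ × ℝ × (Fin (m - 1) → ℝ) := (1, 0, 0)
    have hγ : HasDerivAt (fun t : ℝ => ((x₁ + t : ℝ), (x₂ : ℝ), y)) v 0 := by
      refine (?_ : HasDerivAt (fun t : ℝ => x₁ + t) 1 0).prodMk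
        ((hasDerivAt_const 0 x₂).prodMk (hasDerivAt_const 0 y))
      simpa using (hasDerivAt_id (0:ℝ)).const_add x₁
    have h1 := key _ v (by simp) hγ
    have h2 : HasDerivAt (fun t : ℝ => G (x₁ + t, x₂, y))
        (c₁ x₂ + c₂ x₂ - 2 * x₁) 0 := by
      have ha : HasDerivAt (fun t : ℝ => x₁ + t - c₁ x₂) 1 0 := by
        simpa using ((hasDerivAt_id (0:ℝ)).const_add x₁).sub_const (c₁ x₂)
      have hb : HasDerivAt (fun t : ℝ => c₂ x₂ - (x₁ + t)) (-1) 0 := by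
        simpa using (hasDerivAt_const (0:ℝ) (c₂ x₂)).fun_sub ((hasDerivAt_id (0:ℝ)).const_add x₁)
      have := (ha.fun_mul hb).sub_const (∑ j, (y j) ^ 2)
      have heq : (fun t : ℝ => G (x₁ + t, x₂, y)) =
          fun t : ℝ => (x₁ + t - c₁ x₂) * (c₂ x₂ - (x₁ + t)) - ∑ j, (y j) ^ 2 := by
        simp [hG]
      rw [heq]
      exact this.congr_deriv (by ring)
    have heq : fderiv ℝ G (x₁, x₂, y) v = c₁ x₂ + c₂ x₂ - 2 * x₁ := h1.unique h2
    rw [heq]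
    rcases mul_eq_zero.mp hp' with h | h
    · have : x₁ = c₁ x₂ := by linarith
      have := hlt x₂
      intro hc; rw [‹x₁ = c₁ x₂›] at hc; linarith
    · have : x₁ = c₂ x₂ := by linarith
      have := hlt x₂
      intro hc; rw [‹x₁ = c₂ x₂›] at hc; linarith
end

section
/- Let p = (x₁, x₂, y) ∈ X. Then every vector v in the kernel of the derivative of F at p has vanishing first coordinate v₁ = 0 (i.e., p is a critical point of the restriction to X of the first-coordinate projection) if and only if y = 0 and either (x₁ = c₁(x₂) and c₁′(x₂) = 0) or (x₁ = c₂(x₂) and c₂′(x₂) = 0). -/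
lemma fderiv_formula (m : ℕ) (c₁ c₂ : ℝ → ℝ)
    (hc₁ : ContDiff ℝ (⊤ : ℕ∞) c₁) (hc₂ : ContDiff ℝ (⊤ : ℕ∞) c₂)
    (x₁ x₂ : ℝ) (y : Fin (m - 1) → ℝ) :
    ∀ v : ℝ × ℝ × (Fin (m - 1) → ℝ),
      fderiv ℝ (fun p : ℝ × ℝ × (Fin (m - 1) → ℝ) =>
        (p.1 - c₁ p.2.1) * (c₂ p.2.1 - p.1) - ∑ j, (p.2.2 j)^2) (x₁, x₂, y) v
      = (v.1 - deriv c₁ x₂ * v.2.1) * (c₂ x₂ - x₁)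
        + (x₁ - c₁ x₂) * (deriv c₂ x₂ * v.2.1 - v.1)
        - ∑ j, 2 * y j * v.2.2 j := by
  have hd₁ : DifferentiableAt ℝ c₁ x₂ := (hc₁.differentiable (by simp)).differentiableAt
  have hd₂ : DifferentiableAt ℝ c₂ x₂ := (hc₂.differentiable (by simp)).differentiableAt
  set p₀ : ℝ × ℝ × (Fin (m - 1) → ℝ) := (x₁, x₂, y) with hp₀
  have h1 : HasFDerivAt (fun p : ℝ × ℝ × (Fin (m - 1) → ℝ) => p.1)
      (ContinuousLinearMap.fst ℝ ℝ (ℝ × (Fin (m - 1) → ℝ))) p₀ := hasFDerivAt_fst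
  have h2 : HasFDerivAt (fun p : ℝ × ℝ × (Fin (m - 1) → ℝ) => p.2.1)
      ((ContinuousLinearMap.fst ℝ ℝ (Fin (m - 1) → ℝ)).comp
        (ContinuousLinearMap.snd ℝ ℝ (ℝ × (Fin (m - 1) → ℝ)))) p₀ :=
    hasFDerivAt_fst.comp p₀ hasFDerivAt_snd
  have hc1 : HasFDerivAt (fun p : ℝ × ℝ × (Fin (m - 1) → ℝ) => c₁ p.2.1)
      ((fderiv ℝ c₁ x₂).comp ((ContinuousLinearMap.fst ℝ ℝ (Fin (m - 1) → ℝ)).comp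
        (ContinuousLinearMap.snd ℝ ℝ (ℝ × (Fin (m - 1) → ℝ))))) p₀ :=
    (hd₁.hasFDerivAt).comp p₀ h2
  have hc2 : HasFDerivAt (fun p : ℝ × ℝ × (Fin (m - 1) → ℝ) => c₂ p.2.1)
      ((fderiv ℝ c₂ x₂).comp ((ContinuousLinearMap.fst ℝ ℝ (Fin (m - 1) → ℝ)).comp
        (ContinuousLinearMap.snd ℝ ℝ (ℝ × (Fin (m - 1) → ℝ))))) p₀ :=
    (hd₂.hasFDerivAt).comp p₀ h2
  have hproj : ∀ j : Fin (m - 1), HasFDerivAt (fun p : ℝ × ℝ × (Fin (m - 1) → ℝ) => p.2.2 j)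
      (((ContinuousLinearMap.proj j : ((Fin (m-1)) → ℝ) →L[ℝ] ℝ)).comp
        ((ContinuousLinearMap.snd ℝ ℝ (Fin (m - 1) → ℝ)).comp
        (ContinuousLinearMap.snd ℝ ℝ (ℝ × (Fin (m - 1) → ℝ))))) p₀ := by
    intro j
    exact (((ContinuousLinearMap.proj j : ((Fin (m-1)) → ℝ) →L[ℝ] ℝ)).hasFDerivAt).comp p₀
      (hasFDerivAt_snd.snd)
  have hsum : HasFDerivAt (fun p : ℝ × ℝ × (Fin (m - 1) → ℝ) => ∑ j, (p.2.2 j)^2)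
      (∑ j, (2 * y j) • (((ContinuousLinearMap.proj j : ((Fin (m-1)) → ℝ) →L[ℝ] ℝ)).comp
        ((ContinuousLinearMap.snd ℝ ℝ (Fin (m - 1) → ℝ)).comp
        (ContinuousLinearMap.snd ℝ ℝ (ℝ × (Fin (m - 1) → ℝ)))))) p₀ := by
    apply HasFDerivAt.fun_sum
    intro j _
    have h := (hproj j).mul (hproj j)
    rw [two_mul, add_smul]
    simpa [pow_two, hp₀, Pi.mul_def] using h
  have htot := ((h1.sub hc1).mul (hc2.sub h1)).sub hsum
  intro v
  rw [HasFDerivAt.fderiv (f := fun p : ℝ × ℝ × (Fin (m - 1) → ℝ) =>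
    (p.1 - c₁ p.2.1) * (c₂ p.2.1 - p.1) - ∑ j, (p.2.2 j)^2) htot]
  simp only [ContinuousLinearMap.coe_sub', Pi.sub_apply, ContinuousLinearMap.add_apply,
    ContinuousLinearMap.smul_apply, ContinuousLinearMap.comp_apply,
    ContinuousLinearMap.coe_fst', ContinuousLinearMap.coe_snd',
    ContinuousLinearMap.proj_apply, ContinuousLinearMap.sum_apply, smul_eq_mul]
  have e1 : ∀ t : ℝ, fderiv ℝ c₁ x₂ t = deriv c₁ x₂ * t := by
    intro t
    rw [show t = t • (1:ℝ) by simp, map_smul]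
    simp [fderiv_apply_one_eq_deriv, mul_comm]
  have e2 : ∀ t : ℝ, fderiv ℝ c₂ x₂ t = deriv c₂ x₂ * t := by
    intro t
    rw [show t = t • (1:ℝ) by simp, map_smul]
    simp [fderiv_apply_one_eq_deriv, mul_comm]
  simp only [e1, e2, hp₀]
  ring


/-- For `p = (x₁, x₂, y) ∈ X`, every vector `v` in the kernel of the derivative
of `F` at `p` has vanishing first coordinate (i.e. `p` is a critical point of the restriction
to `X` of the first-coordinate projection) iff `y = 0` and either
(`x₁ = c₁ x₂` and `c₁′(x₂) = 0`) or (`x₁ = c₂ x₂` and `c₂′(x₂) = 0`). -/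
theorem stmt1 (m : ℕ) (hm : 2 ≤ m) (c₁ c₂ : ℝ → ℝ)
    (hc₁ : ContDiff ℝ (⊤ : ℕ∞) c₁) (hc₂ : ContDiff ℝ (⊤ : ℕ∞) c₂)
    (hlt : ∀ x : ℝ, c₁ x < c₂ x)
    (F : ℝ × ℝ × (Fin (m - 1) → ℝ) → ℝ)
    (hF : ∀ x₁ x₂ : ℝ, ∀ y : Fin (m - 1) → ℝ,
      F (x₁, x₂, y) = (x₁ - c₁ x₂) * (c₂ x₂ - x₁) - ∑ j, (y j) ^ 2)
    (x₁ x₂ : ℝ) (y : Fin (m - 1) → ℝ) (hp : F (x₁, x₂, y) = 0) :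
    (∀ v : ℝ × ℝ × (Fin (m - 1) → ℝ), fderiv ℝ F (x₁, x₂, y) v = 0 → v.1 = 0) ↔
      (y = 0 ∧ ((x₁ = c₁ x₂ ∧ deriv c₁ x₂ = 0) ∨ (x₁ = c₂ x₂ ∧ deriv c₂ x₂ = 0))) := by

  have hFeq : F = fun p : ℝ × ℝ × (Fin (m - 1) → ℝ) =>
      (p.1 - c₁ p.2.1) * (c₂ p.2.1 - p.1) - ∑ j, (p.2.2 j)^2 := by
    funext p
    obtain ⟨a, b, c⟩ := p
    exact hF a b c
  subst hFeq
  simp only at hp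
  have key := fderiv_formula m c₁ c₂ hc₁ hc₂ x₁ x₂ y
  have hgap : c₁ x₂ < c₂ x₂ := hlt x₂
  set d₁ := deriv c₁ x₂ with hd₁
  set d₂ := deriv c₂ x₂ with hd₂
  constructor
  · intro H
    -- step 1: A ≠ 0
    set A : ℝ := (c₂ x₂ - x₁) - (x₁ - c₁ x₂) with hA_def
    have hA : A ≠ 0 := by
      intro h0
      have h1 := H (1, 0, 0) (by rw [key]; simp; linarith [h0])
      simpa using h1
    -- step 2: y = 0
    have hy : y = 0 := by
      funext j
      have hv := H (2 * y j / A, 0, Pi.single j 1) ?_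
      · have : 2 * y j / A = 0 := hv
        have := (div_eq_zero_iff.mp this).resolve_right hA
        simpa using this
      · rw [key]
        have hs : ∑ i, 2 * y i * (Pi.single j 1 : Fin (m-1) → ℝ) i = 2 * y j := by
          rw [Finset.sum_eq_single j]
          · simp
          · intro i _ hij; simp [Pi.single_apply, hij]
          · intro h; exact absurd (Finset.mem_univ j) h
        simp only [hs]
        field_simp
        ring
    -- step 3: B = 0
    set B : ℝ := (x₁ - c₁ x₂) * d₂ - d₁ * (c₂ x₂ - x₁) with hB_def
    have hB : B = 0 := by
      have hv := H (-B / A, 1, 0) ?_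
      · have : -B / A = 0 := hv
        have := (div_eq_zero_iff.mp this).resolve_right hA
        linarith [neg_eq_zero.mp this]
      · rw [key]
        simp only [hy, Pi.zero_apply, mul_zero, zero_mul, Finset.sum_const_zero]
        field_simp
        ring
    refine ⟨hy, ?_⟩
    have hprod : (x₁ - c₁ x₂) * (c₂ x₂ - x₁) = 0 := by
      rw [hy] at hp; simpa using hp
    rcases mul_eq_zero.mp hprod with h | h
    · left
      have hx : x₁ = c₁ x₂ := by linarith [sub_eq_zero.mp h]
      refine ⟨hx, ?_⟩
      have : d₁ * (c₂ x₂ - x₁) = 0 := by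
        rw [hB_def] at hB; rw [h] at hB; linarith [hB]
      rcases mul_eq_zero.mp this with h' | h'
      · exact h'
      · exfalso; rw [hx] at h'; linarith [sub_eq_zero.mp h']
    · right
      have hx : x₁ = c₂ x₂ := by linarith [sub_eq_zero.mp h]
      refine ⟨hx, ?_⟩
      have : (x₁ - c₁ x₂) * d₂ = 0 := by
        rw [hB_def] at hB; rw [h] at hB; linarith [hB]
      rcases mul_eq_zero.mp this with h' | h'
      · exfalso; rw [hx] at h'; linarith [sub_eq_zero.mp h']
      · exact h'
  · rintro ⟨hy, hcase⟩
    intro v hv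
    rw [key] at hv
    rcases hcase with ⟨hx, hd⟩ | ⟨hx, hd⟩
    · rw [hy] at hv
      rw [hx, hd] at hv
      simp only [Pi.zero_apply, mul_zero, zero_mul, Finset.sum_const_zero, sub_zero,
        zero_mul, sub_self] at hv
      have : v.1 * (c₂ x₂ - c₁ x₂) = 0 := by linarith [hv]
      rcases mul_eq_zero.mp this with h | h
      · exact h
      · exfalso; linarith [sub_eq_zero.mp h]
    · rw [hy] at hv
      rw [hx, hd] at hv
      simp only [Pi.zero_apply, mul_zero, zero_mul, Finset.sum_const_zero, sub_zero,
        zero_mul, sub_self] at hv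
      have : v.1 * (c₂ x₂ - c₁ x₂) = 0 := by nlinarith [hv]
      rcases mul_eq_zero.mp this with h | h
      · exact h
      · exfalso; linarith [sub_eq_zero.mp h]
end

section
/- Assume m ≥ 3. Then for every connected subset C ⊆ D̄, the preimage of C in X under the map π(x₁, x₂, y) = (x₁, x₂) is connected; in particular every fiber of π restricted to X is connected. -/
/-- Assume `m ≥ 3`. For every connected subset `C ⊆ D̄`, the preimage of `C` in
`X` under `π(x₁,x₂,y) = (x₁,x₂)` is connected; in particular every fiber of `π|X` is
connected. -/
theorem stmt4 (m : ℕ) (hm : 3 ≤ m) (c₁ c₂ : ℝ → ℝ)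
    (hc₁ : ContDiff ℝ (⊤ : ℕ∞) c₁) (hc₂ : ContDiff ℝ (⊤ : ℕ∞) c₂)
    (hlt : ∀ x : ℝ, c₁ x < c₂ x)
    (F : ℝ × ℝ × (Fin (m - 1) → ℝ) → ℝ)
    (hF : ∀ x₁ x₂ : ℝ, ∀ y : Fin (m - 1) → ℝ,
      F (x₁, x₂, y) = (x₁ - c₁ x₂) * (c₂ x₂ - x₁) - ∑ j, (y j) ^ 2)
    (C : Set (ℝ × ℝ)) (hCD : C ⊆ {q : ℝ × ℝ | c₁ q.2 ≤ q.1 ∧ q.1 ≤ c₂ q.2})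
    (hC : IsConnected C) :
    IsConnected {p : ℝ × ℝ × (Fin (m - 1) → ℝ) | F p = 0 ∧ (p.1, p.2.1) ∈ C} := by
  set g : ℝ × ℝ → ℝ := fun q => (q.1 - c₁ q.2) * (c₂ q.2 - q.1) with hg
  have hgpos : ∀ q ∈ C, 0 ≤ g q := by
    intro q hq
    have h := hCD hq
    exact mul_nonneg (by linarith [h.1]) (by linarith [h.2])
  have hgc : Continuous g := by
    apply Continuous.mul
    · exact continuous_fst.sub (hc₁.continuous.comp continuous_snd)
    · exact (hc₂.continuous.comp continuous_snd).sub continuous_fst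
  let i0 : Fin (m - 1) := ⟨0, by omega⟩
  -- the section
  set s : ℝ × ℝ → ℝ × ℝ × (Fin (m - 1) → ℝ) :=
    fun q => (q.1, q.2, fun j => if j = i0 then Real.sqrt (g q) else 0) with hs
  have hsum : ∀ a : ℝ, ∑ j : Fin (m - 1), (if j = i0 then a else 0) ^ 2 = a ^ 2 := by
    intro a
    have : ∀ j : Fin (m - 1), ((if j = i0 then a else 0 : ℝ)) ^ 2
        = if j = i0 then a ^ 2 else 0 := by
      intro j; split <;> simp
    rw [Finset.sum_congr rfl fun j _ => this j, Finset.sum_ite_eq' Finset.univ i0]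
    simp
  have hFs : ∀ q ∈ C, F (s q) = 0 := by
    intro q hq
    rw [hs]
    simp only [hF, hsum]
    rw [Real.sq_sqrt (hgpos q hq)]
    simp [hg]
  have hscont : Continuous s := by
    refine continuous_fst.prodMk (continuous_snd.prodMk (continuous_pi fun j => ?_))
    by_cases h : j = i0
    · simp only [h, if_true]; exact Real.continuous_sqrt.comp hgc
    · simp only [h, if_false]; exact continuous_const
  set E : Set (ℝ × ℝ × (Fin (m - 1) → ℝ)) :=
    {p | F p = 0 ∧ (p.1, p.2.1) ∈ C} with hE
  set sC : Set (ℝ × ℝ × (Fin (m - 1) → ℝ)) := s '' C with hsC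
  have hsmem : ∀ q ∈ C, s q ∈ E := by
    intro q hq
    refine ⟨hFs q hq, ?_⟩
    simpa [hs] using hq
  -- sphere rank fact
  have hrank : 1 < Module.rank ℝ (EuclideanSpace ℝ (Fin (m - 1))) := by
    rw [← Module.finrank_eq_rank, finrank_euclideanSpace_fin]
    exact_mod_cast (by omega : 1 < m - 1)
  -- fibers
  set fib : ℝ × ℝ → Set (ℝ × ℝ × (Fin (m - 1) → ℝ)) :=
    fun q => {p | F p = 0 ∧ (p.1, p.2.1) = q} with hfib
  have hfibconn : ∀ q ∈ C, IsConnected (fib q) := by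
    intro q hq
    have himg : fib q = (fun y : Fin (m - 1) → ℝ => (q.1, q.2, y)) ''
        {y : Fin (m - 1) → ℝ | ∑ j, (y j) ^ 2 = g q} := by
      ext p
      constructor
      · rintro ⟨hp0, hpq⟩
        refine ⟨p.2.2, ?_, ?_⟩
        · have : F (p.1, p.2.1, p.2.2) = 0 := by simpa using hp0
          rw [hF] at this
          have h1 : p.1 = q.1 := congrArg Prod.fst hpq
          have h2 : p.2.1 = q.2 := congrArg Prod.snd hpq
          simp only [Set.mem_setOf_eq, hg]
          rw [← h1, ← h2]; linarith
        · have h1 : p.1 = q.1 := congrArg Prod.fst hpq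
          have h2 : p.2.1 = q.2 := congrArg Prod.snd hpq
          ext <;> simp [h1.symm, h2.symm]
      · rintro ⟨y, hy, rfl⟩
        refine ⟨?_, rfl⟩
        rw [hF]
        simp only [Set.mem_setOf_eq] at hy
        rw [hy]; simp [hg]
    rw [himg]
    let e := (EuclideanSpace.equiv (Fin (m - 1)) ℝ).toHomeomorph
    have hsph : {y : Fin (m - 1) → ℝ | ∑ j, (y j) ^ 2 = g q}
        = e '' Metric.sphere 0 (Real.sqrt (g q)) := by
      have he : ∀ z : EuclideanSpace ℝ (Fin (m - 1)), e z = z := fun _ => rfl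
      ext y
      simp only [Set.mem_setOf_eq, Set.mem_image]
      constructor
      · intro hy
        refine ⟨WithLp.toLp 2 y, ?_, he (WithLp.toLp 2 y)⟩
        rw [mem_sphere_zero_iff_norm, EuclideanSpace.norm_eq]
        simp only [Real.norm_eq_abs, sq_abs, PiLp.toLp_apply]
        rw [hy]
      · rintro ⟨z, hz, hez⟩
        have hzy : (z : Fin (m - 1) → ℝ) = y := by rw [← he z, hez]
        rw [mem_sphere_zero_iff_norm, EuclideanSpace.norm_eq] at hz
        simp only [Real.norm_eq_abs, sq_abs] at hz
        have hnn : 0 ≤ ∑ i, (z i) ^ 2 := Finset.sum_nonneg fun i _ => sq_nonneg _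
        have := (Real.sqrt_inj hnn (hgpos q hq)).mp hz
        rw [← hzy]
        exact this
    rw [hsph]
    have hconn : IsConnected (Metric.sphere (0 : EuclideanSpace ℝ (Fin (m - 1)))
        (Real.sqrt (g q))) := isConnected_sphere hrank 0 (Real.sqrt_nonneg _)
    exact (hconn.image e e.continuous.continuousOn).image _
      (Continuous.continuousOn (by continuity))
  have hsCconn : IsPreconnected sC := (hC.image s hscont.continuousOn).isPreconnected
  have hsfib : ∀ q ∈ C, s q ∈ fib q := by
    intro q hq
    exact ⟨hFs q hq, by simp [hs]⟩
  -- E as union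
  obtain ⟨q0, hq0⟩ := hC.nonempty
  have hEeq : E = ⋃₀ ((fun q => fib q ∪ sC) '' C) := by
    rw [Set.sUnion_image]
    ext p
    constructor
    · intro hp
      exact Set.mem_biUnion hp.2 (Or.inl ⟨hp.1, rfl⟩)
    · intro hp
      simp only [Set.mem_iUnion] at hp
      obtain ⟨q, hq, hpq⟩ := hp
      rcases hpq with h | h
      · exact ⟨h.1, h.2 ▸ hq⟩
      · obtain ⟨r, hr, rfl⟩ := h
        exact hsmem r hr
  constructor
  · exact ⟨s q0, hsmem q0 hq0⟩
  · rw [hEeq]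
    apply isPreconnected_sUnion (s q0)
    · rintro t ⟨q, hq, rfl⟩
      exact Or.inr ⟨q0, hq0, rfl⟩
    · rintro t ⟨q, hq, rfl⟩
      exact IsPreconnected.union (s q) (hsfib q hq) ⟨q, hq, rfl⟩
        (hfibconn q hq).isPreconnected hsCconn
end

section
/- Assume m ≥ 3. Let f_X : X → ℝ be f_X(x₁, x₂, y) = x₁ and f_D : D̄ → ℝ be f_D(x₁, x₂) = x₁. Then there is a homeomorphism h from the Reeb space R_{f_X} onto the Reeb space R_{f_D} satisfying h ∘ q_{f_X} = q_{f_D} ∘ π, where π : X → D̄ is π(x₁, x₂, y) = (x₁, x₂); moreover f̄_X = f̄_D ∘ h. -/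
/-- The Reeb relation of a function `f : A → ℝ`: `a ~ b` iff `f a = f b` and `a` and `b`
lie in the same connected component of the level set `f ⁻¹' {f a}`. -/
def ReebRel {A : Type*} [TopologicalSpace A] (f : A → ℝ) (a b : A) : Prop :=
  f a = f b ∧ b ∈ connectedComponentIn (f ⁻¹' {f a}) a

/-- The Reeb space of `f`, i.e. the quotient of `A` by the Reeb relation, with the
quotient topology. -/
def ReebSpace {A : Type*} [TopologicalSpace A] (f : A → ℝ) : Type _ :=
  Quot (ReebRel f)

instance {A : Type*} [TopologicalSpace A] (f : A → ℝ) : TopologicalSpace (ReebSpace f) :=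
  instTopologicalSpaceQuot

/-- The quotient map `q_f : A → R_f`. -/
def reebQuot {A : Type*} [TopologicalSpace A] (f : A → ℝ) : A → ReebSpace f :=
  Quot.mk (ReebRel f)

/-- The induced function `f̄ : R_f → ℝ`, the unique (continuous) map with `f = f̄ ∘ q_f`. -/
def reebBar {A : Type*} [TopologicalSpace A] (f : A → ℝ) : ReebSpace f → ℝ :=
  Quot.lift f (fun _ _ h => h.1)

lemma mem_ccIn_of_mapsTo {A B : Type*} [TopologicalSpace A] [TopologicalSpace B]
    {f : A → B} (hf : Continuous f) {s : Set A} {t : Set B} (hst : Set.MapsTo f s t)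
    {a b : A} (hb : b ∈ connectedComponentIn s a) :
    f b ∈ connectedComponentIn t (f a) := by
  have ha : a ∈ s := connectedComponentIn_nonempty_iff.mp ⟨b, hb⟩
  exact connectedComponentIn_mono (f a) hst.image_subset
    (hf.mapsTo_connectedComponentIn ha hb)


/-- Assume `m ≥ 3`.  With `f_X : X → ℝ`, `f_X(x₁,x₂,y) = x₁` and
`f_D : D̄ → ℝ`, `f_D(x₁,x₂) = x₁`, there is a homeomorphism `h : R_{f_X} ≃ₜ R_{f_D}` with
`h ∘ q_{f_X} = q_{f_D} ∘ π`, where `π(x₁,x₂,y) = (x₁,x₂)`; moreover `f̄_X = f̄_D ∘ h`. -/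
theorem stmt5 (m : ℕ) (hm : 3 ≤ m) (c₁ c₂ : ℝ → ℝ)
    (hc₁ : ContDiff ℝ (⊤ : ℕ∞) c₁) (hc₂ : ContDiff ℝ (⊤ : ℕ∞) c₂)
    (hlt : ∀ x : ℝ, c₁ x < c₂ x)
    (F : ℝ × ℝ × (Fin (m - 1) → ℝ) → ℝ)
    (hF : ∀ x₁ x₂ : ℝ, ∀ y : Fin (m - 1) → ℝ,
      F (x₁, x₂, y) = (x₁ - c₁ x₂) * (c₂ x₂ - x₁) - ∑ j, (y j) ^ 2)
    (π : {p : ℝ × ℝ × (Fin (m - 1) → ℝ) // F p = 0} →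
      {q : ℝ × ℝ // c₁ q.2 ≤ q.1 ∧ q.1 ≤ c₂ q.2})
    (hπ : ∀ p, (π p).1 = (p.1.1, p.1.2.1)) :
    ∃ h : ReebSpace (fun p : {p : ℝ × ℝ × (Fin (m - 1) → ℝ) // F p = 0} => p.1.1) ≃ₜ
        ReebSpace (fun q : {q : ℝ × ℝ // c₁ q.2 ≤ q.1 ∧ q.1 ≤ c₂ q.2} => q.1.1),
      (∀ p, h (reebQuot _ p) = reebQuot _ (π p)) ∧
      reebBar (fun p : {p : ℝ × ℝ × (Fin (m - 1) → ℝ) // F p = 0} => p.1.1) =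
        (reebBar (fun q : {q : ℝ × ℝ // c₁ q.2 ≤ q.1 ∧ q.1 ≤ c₂ q.2} => q.1.1)) ∘ h := by
  classical
  have h0 : 0 < m - 1 := by omega
  set fX : {p : ℝ × ℝ × (Fin (m - 1) → ℝ) // F p = 0} → ℝ := fun p => p.1.1 with hfX
  set fD : {q : ℝ × ℝ // c₁ q.2 ≤ q.1 ∧ q.1 ≤ c₂ q.2} → ℝ := fun q => q.1.1 with hfD
  set i0 : Fin (m - 1) := ⟨0, h0⟩ with hi0
  set P : ℝ × ℝ → ℝ := fun q => (q.1 - c₁ q.2) * (c₂ q.2 - q.1) with hP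
  have hPcont : Continuous P := by
    have := hc₁.continuous; have := hc₂.continuous; fun_prop
  have hPnn : ∀ q : {q : ℝ × ℝ // c₁ q.2 ≤ q.1 ∧ q.1 ≤ c₂ q.2}, 0 ≤ P q.1 := fun q =>
    mul_nonneg (sub_nonneg.2 q.2.1) (sub_nonneg.2 q.2.2)
  have hsum : ∀ s : ℝ, ∑ j : Fin (m - 1), (if j = i0 then s else 0) ^ 2 = s ^ 2 := by
    intro s
    simp [apply_ite (· ^ 2 : ℝ → ℝ), Finset.sum_ite_eq']
  have hσmem : ∀ q : {q : ℝ × ℝ // c₁ q.2 ≤ q.1 ∧ q.1 ≤ c₂ q.2},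
      F (q.1.1, q.1.2, fun j => if j = i0 then Real.sqrt (P q.1) else 0) = 0 := by
    intro q
    rw [hF, hsum, Real.sq_sqrt (hPnn q)]
    simp [P]
  set σ : {q : ℝ × ℝ // c₁ q.2 ≤ q.1 ∧ q.1 ≤ c₂ q.2} →
      {p : ℝ × ℝ × (Fin (m - 1) → ℝ) // F p = 0} :=
    fun q => ⟨(q.1.1, q.1.2, fun j => if j = i0 then Real.sqrt (P q.1) else 0),
      hσmem q⟩ with hσ
  have hσcont : Continuous σ := by
    apply Continuous.subtype_mk
    refine Continuous.prodMk continuous_subtype_val.fst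
      (Continuous.prodMk continuous_subtype_val.snd (continuous_pi fun j => ?_))
    by_cases hj : j = i0
    · simpa [hj, Function.comp_def] using Real.continuous_sqrt.comp (hPcont.comp continuous_subtype_val)
    · simpa [hj] using continuous_const
  have hπcont : Continuous π := by
    apply continuous_induced_rng.2
    have : (Subtype.val ∘ π) = fun p => (p.1.1, p.1.2.1) := funext hπ
    rw [this]
    fun_prop
  have hπσ : ∀ q, π (σ q) = q := by
    intro q
    apply Subtype.ext
    rw [hπ]
  have wd1 : ∀ p p', ReebRel fX p p' → ReebRel fD (π p) (π p') := by
    intro p p' ⟨hf, hcc⟩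
    have hfp : fD (π p) = fX p := by show (π p).1.1 = _; rw [hπ]
    refine ⟨?_, ?_⟩
    · show (π p).1.1 = (π p').1.1
      rw [hπ, hπ]; exact hf
    rw [hfp]
    refine mem_ccIn_of_mapsTo hπcont ?_ hcc
    intro x hx
    simp only [Set.mem_preimage, Set.mem_singleton_iff] at hx ⊢
    simp [hfD, hfX, hπ] at hx ⊢
    exact hx
  have wd2 : ∀ q q', ReebRel fD q q' → ReebRel fX (σ q) (σ q') := by
    intro q q' ⟨hf, hcc⟩
    refine ⟨hf, ?_⟩
    have hfp : fX (σ q) = fD q := rfl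
    rw [hfp]
    exact mem_ccIn_of_mapsTo hσcont (fun x hx => hx) hcc
  have key : ∀ p, ReebRel fX (σ (π p)) p := by
    intro p
    obtain ⟨⟨a, b, y⟩, hmem⟩ := p
    set p : {p : ℝ × ℝ × (Fin (m - 1) → ℝ) // F p = 0} := ⟨(a, b, y), hmem⟩ with hp
    have hab : (π p).1 = (a, b) := hπ p
    have hfp : fX (σ (π p)) = fX p := by simp [hfX, hσ, hab]; rfl
    refine ⟨hfp, ?_⟩
    -- the fiber sphere
    set r := P (a, b) with hr
    have hy : ∑ j, y j ^ 2 = r := by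
      have h' := (hF a b y).symm.trans hmem
      show ∑ j, y j ^ 2 = (a - c₁ b) * (c₂ b - a)
      linarith
    have hrnn : 0 ≤ r := hy ▸ Finset.sum_nonneg fun j _ => sq_nonneg (y j)
    have hrank : 1 < Module.rank ℝ (EuclideanSpace ℝ (Fin (m - 1))) := by
      rw [← Module.finrank_eq_rank, finrank_euclideanSpace_fin]
      exact_mod_cast (by omega : 2 ≤ m - 1)
    have hsph := isConnected_sphere hrank (0 : EuclideanSpace ℝ (Fin (m - 1)))
      (Real.sqrt_nonneg r)
    have hsphset : Metric.sphere (0 : EuclideanSpace ℝ (Fin (m - 1))) (Real.sqrt r)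
        = {x : EuclideanSpace ℝ (Fin (m - 1)) | ∑ i, x i ^ 2 = r} := by
      rw [EuclideanSpace.sphere_zero_eq _ (Real.sqrt_nonneg r), Real.sq_sqrt hrnn]
    -- map from the sphere into X
    have hmem' : ∀ x : Metric.sphere (0 : EuclideanSpace ℝ (Fin (m - 1))) (Real.sqrt r),
        F (a, b, (x : EuclideanSpace ℝ (Fin (m - 1)))) = 0 := by
      intro ⟨x, hx⟩
      rw [hsphset] at hx
      rw [hF]
      simp only
      rw [hx]
      simp [hr, P]
    set g : Metric.sphere (0 : EuclideanSpace ℝ (Fin (m - 1))) (Real.sqrt r) →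
        {p : ℝ × ℝ × (Fin (m - 1) → ℝ) // F p = 0} :=
      fun x => ⟨(a, b, (x : EuclideanSpace ℝ (Fin (m - 1)))), hmem' x⟩ with hg
    have hgcont : Continuous g := by
      apply Continuous.subtype_mk
      refine Continuous.prodMk continuous_const (Continuous.prodMk continuous_const ?_)
      exact (PiLp.continuousLinearEquiv 2 ℝ (fun _ : Fin (m - 1) => ℝ)).continuous.comp
        continuous_subtype_val
    have hpre : PreconnectedSpace
        (Metric.sphere (0 : EuclideanSpace ℝ (Fin (m - 1))) (Real.sqrt r)) :=
      Subtype.preconnectedSpace hsph.isPreconnected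
    have hC : IsPreconnected (Set.range g) := isPreconnected_range hgcont
    have hsub : Set.range g ⊆ fX ⁻¹' {fX (σ (π p))} := by
      rintro x ⟨w, rfl⟩
      simp only [Set.mem_preimage, Set.mem_singleton_iff, hfX, hg]
      simp [hσ, hab]
    have hσmem' : σ (π p) ∈ Set.range g := by
      refine ⟨⟨(WithLp.toLp 2 (fun j => if j = i0 then Real.sqrt (P (π p).1) else 0) :
        EuclideanSpace ℝ (Fin (m - 1))), ?_⟩, ?_⟩
      · rw [hsphset]
        show ∑ j, (if j = i0 then Real.sqrt (P (π p).1) else 0) ^ 2 = r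
        rw [hsum, Real.sq_sqrt (hPnn (π p)), hab]
      · apply Subtype.ext
        simp [hg, hσ, hab]
    have hpmem : p ∈ Set.range g := by
      refine ⟨⟨(WithLp.toLp 2 y : EuclideanSpace ℝ (Fin (m - 1))), ?_⟩, ?_⟩
      · rw [hsphset]; exact hy
      · rfl
    exact hC.subset_connectedComponentIn hσmem' hsub hpmem
  let h₁ : ReebSpace fX → ReebSpace fD :=
    Quot.lift (fun p => reebQuot fD (π p)) (fun a b r => Quot.sound (wd1 a b r))
  let h₂ : ReebSpace fD → ReebSpace fX :=
    Quot.lift (fun q => reebQuot fX (σ q)) (fun a b r => Quot.sound (wd2 a b r))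
  have e₁ : ∀ p, h₁ (Quot.mk (ReebRel fX) p) = Quot.mk (ReebRel fD) (π p) := fun _ => rfl
  have e₂ : ∀ q, h₂ (Quot.mk (ReebRel fD) q) = Quot.mk (ReebRel fX) (σ q) := fun _ => rfl
  have left_inv : ∀ z : ReebSpace fX, h₂ (h₁ z) = z := by
    refine fun z => Quot.ind (β := fun w => h₂ (h₁ w) = w) (fun p => ?_) z
    show h₂ (h₁ (Quot.mk (ReebRel fX) p)) = Quot.mk (ReebRel fX) p
    rw [e₁, e₂]
    exact Quot.sound (key p)
  have right_inv : ∀ z : ReebSpace fD, h₁ (h₂ z) = z := by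
    refine fun z => Quot.ind (β := fun w => h₁ (h₂ w) = w) (fun q => ?_) z
    show h₁ (h₂ (Quot.mk (ReebRel fD) q)) = Quot.mk (ReebRel fD) q
    rw [e₂, e₁]
    exact congrArg (Quot.mk (ReebRel fD)) (hπσ q)
  refine ⟨⟨⟨h₁, h₂, left_inv, right_inv⟩,
      continuous_quot_lift _ (continuous_quot_mk.comp hπcont),
      continuous_quot_lift _ (continuous_quot_mk.comp hσcont)⟩, fun p => e₁ p, ?_⟩
  funext z
  refine Quot.ind (β := fun w => reebBar fX w = (reebBar fD ∘ _) w) (fun p => ?_) z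
  show reebBar fX (Quot.mk _ p) = reebBar fD (h₁ (Quot.mk _ p))
  rw [e₁]
  show p.1.1 = (π p).1.1
  rw [hπ]
end

section
/- Let c₁, c₂ : ℝ → ℝ be differentiable functions whose critical sets S(c₁) and S(c₂) are closed and discrete subsets of ℝ. Suppose there are real numbers x_m ≤ x_M and, for i = 1, 2, subsets Z_{m,i}, Z_{M,i} ⊆ ℝ each having at most one element, such that c_i(S(c_i) ∩ (−∞, x_m]) is a discrete and closed subset of the subspace ℝ ∖ Z_{m,i} and c_i(S(c_i) ∩ [x_M, ∞)) is a discrete and closed subset of the subspace ℝ ∖ Z_{M,i}. Then, setting Z_F = Z_{m,1} ∪ Z_{M,1} ∪ Z_{m,2} ∪ Z_{M,2} (a set with at most four elements), the set c₁(S(c₁)) ∪ c₂(S(c₂)) is a discrete and closed subset of the subspace ℝ ∖ Z_F. -/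
/-! A set without accumulation points meets the compact interval `[x_m, x_M]` in a finite set,
so each `c_i(S(c_i))` is the union of the two end pieces, which have no accumulation points
off `Z_{m,i}` and `Z_{M,i}` respectively, and a finite middle piece, which has none at all. -/

open Filter

/-- The critical set `S(c) = {x | c′(x) = 0}` of a differentiable function `c : ℝ → ℝ`. -/
def critSet (c : ℝ → ℝ) : Set ℝ := {x : ℝ | deriv c x = 0}

/-- `V` is a discrete and closed subset of the subspace `ℝ ∖ Z`:
no point of `ℝ ∖ Z` is an accumulation point of `V`. -/
def DiscreteClosedOutside (V Z : Set ℝ) : Prop :=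
  ∀ y : ℝ, y ∉ Z → ¬ AccPt y (𝓟 V)

open Set

lemma IsCompact.finite_inter_of_forall_not_accPt {X : Type*} [TopologicalSpace X] {S K : Set X}
    (hK : IsCompact K) (hS : ∀ x, ¬ AccPt x (𝓟 S)) : (S ∩ K).Finite := by
  by_contra hinf
  obtain ⟨x, -, hx⟩ := Set.Infinite.exists_accPt_of_subset_isCompact hinf hK inter_subset_right
  exact hS x (hx.mono (principal_mono.2 inter_subset_left))

lemma Set.Finite.discreteClosedOutside {V : Set ℝ} (hV : V.Finite) (Z : Set ℝ) :
    DiscreteClosedOutside V Z :=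
  fun _ _ hacc ↦ Set.Infinite.of_accPt hacc hV

namespace DiscreteClosedOutside

variable {V W Z Z' : Set ℝ}

lemma mono {V' : Set ℝ} (h : DiscreteClosedOutside V Z) (hV : V' ⊆ V) (hZ : Z ⊆ Z') :
    DiscreteClosedOutside V' Z' :=
  fun y hy hacc ↦ h y (fun hyZ ↦ hy (hZ hyZ)) (hacc.mono (principal_mono.2 hV))

lemma union (hV : DiscreteClosedOutside V Z) (hW : DiscreteClosedOutside W Z') :
    DiscreteClosedOutside (V ∪ W) (Z ∪ Z') := by
  intro y hy hacc
  rw [mem_union, not_or] at hy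
  rw [← sup_principal, accPt_sup] at hacc
  exact hacc.elim (hV y hy.1) (hW y hy.2)

end DiscreteClosedOutside

lemma discreteClosedOutside_image_of_Iic_of_Ici {S Zm ZM : Set ℝ} {a b : ℝ} (f : ℝ → ℝ)
    (hS : ∀ x, ¬ AccPt x (𝓟 S))
    (hm : DiscreteClosedOutside (f '' (S ∩ Iic a)) Zm)
    (hM : DiscreteClosedOutside (f '' (S ∩ Ici b)) ZM) :
    DiscreteClosedOutside (f '' S) (Zm ∪ ZM) := by
  have hmid : DiscreteClosedOutside (f '' (S ∩ Icc a b)) ∅ :=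
    ((isCompact_Icc.finite_inter_of_forall_not_accPt hS).image f).discreteClosedOutside ∅
  have hsplit : S ⊆ S ∩ Iic a ∪ S ∩ Icc a b ∪ S ∩ Ici b := by
    intro x hx
    rcases le_total x a with hxa | hax
    · exact Or.inl (Or.inl ⟨hx, hxa⟩)
    rcases le_total x b with hxb | hbx
    · exact Or.inl (Or.inr ⟨hx, hax, hxb⟩)
    · exact Or.inr ⟨hx, hbx⟩
  refine ((hm.union hmid).union hM).mono ?_ (by simp)
  rw [← image_union, ← image_union]
  exact image_mono hsplit

theorem stmt9_general (c₁ c₂ : ℝ → ℝ)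
    (hS₁ : ∀ y : ℝ, ¬ AccPt y (𝓟 (critSet c₁)))
    (hS₂ : ∀ y : ℝ, ¬ AccPt y (𝓟 (critSet c₂)))
    (xm xM : ℝ)
    (Zm₁ ZM₁ Zm₂ ZM₂ : Set ℝ)
    (hm₁ : DiscreteClosedOutside (c₁ '' (critSet c₁ ∩ Set.Iic xm)) Zm₁)
    (hM₁ : DiscreteClosedOutside (c₁ '' (critSet c₁ ∩ Set.Ici xM)) ZM₁)
    (hm₂ : DiscreteClosedOutside (c₂ '' (critSet c₂ ∩ Set.Iic xm)) Zm₂)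
    (hM₂ : DiscreteClosedOutside (c₂ '' (critSet c₂ ∩ Set.Ici xM)) ZM₂) :
    DiscreteClosedOutside (c₁ '' critSet c₁ ∪ c₂ '' critSet c₂)
      (Zm₁ ∪ ZM₁ ∪ Zm₂ ∪ ZM₂) := by
  rw [union_assoc (Zm₁ ∪ ZM₁)]
  exact (discreteClosedOutside_image_of_Iic_of_Ici c₁ hS₁ hm₁ hM₁).union
    (discreteClosedOutside_image_of_Iic_of_Ici c₂ hS₂ hm₂ hM₂)

/-- Let `c₁, c₂` be differentiable with closed discrete critical sets.
If there are `x_m ≤ x_M` and sets `Z_{m,i}, Z_{M,i}` with at most one element each such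
that `c_i(S(c_i) ∩ (−∞, x_m])` is discrete and closed in `ℝ ∖ Z_{m,i}` and
`c_i(S(c_i) ∩ [x_M, ∞))` is discrete and closed in `ℝ ∖ Z_{M,i}`, then with
`Z_F = Z_{m,1} ∪ Z_{M,1} ∪ Z_{m,2} ∪ Z_{M,2}` (at most four elements), the set
`c₁(S(c₁)) ∪ c₂(S(c₂))` is discrete and closed in the subspace `ℝ ∖ Z_F`. -/
theorem stmt9 (c₁ c₂ : ℝ → ℝ)
    (hc₁ : Differentiable ℝ c₁) (hc₂ : Differentiable ℝ c₂)
    (hS₁ : ∀ y : ℝ, ¬ AccPt y (𝓟 (critSet c₁)))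
    (hS₂ : ∀ y : ℝ, ¬ AccPt y (𝓟 (critSet c₂)))
    (xm xM : ℝ) (hxmM : xm ≤ xM)
    (Zm₁ ZM₁ Zm₂ ZM₂ : Set ℝ)
    (hZm₁ : Zm₁.Subsingleton) (hZM₁ : ZM₁.Subsingleton)
    (hZm₂ : Zm₂.Subsingleton) (hZM₂ : ZM₂.Subsingleton)
    (hm₁ : DiscreteClosedOutside (c₁ '' (critSet c₁ ∩ Set.Iic xm)) Zm₁)
    (hM₁ : DiscreteClosedOutside (c₁ '' (critSet c₁ ∩ Set.Ici xM)) ZM₁)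
    (hm₂ : DiscreteClosedOutside (c₂ '' (critSet c₂ ∩ Set.Iic xm)) Zm₂)
    (hM₂ : DiscreteClosedOutside (c₂ '' (critSet c₂ ∩ Set.Ici xM)) ZM₂) :
    DiscreteClosedOutside (c₁ '' critSet c₁ ∪ c₂ '' critSet c₂)
      (Zm₁ ∪ ZM₁ ∪ Zm₂ ∪ ZM₂) :=
  stmt9_general c₁ c₂ hS₁ hS₂ xm xM Zm₁ ZM₁ Zm₂ ZM₂ hm₁ hM₁ hm₂ hM₂
end

section
/- The function c₁ is antitone (monotone nonincreasing), c₁(x) < 0 for every x ∈ ℝ, c₁(x) → 0 as x → −∞, c₁(x) → −I as x → +∞, and the critical set {x ∈ ℝ : c₁′(x) = 0} equals the zero set {x ∈ ℝ : P(x) = 0}, which is a closed and discrete subset of ℝ. -/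
open Filter MeasureTheory

/-- With `P` real analytic, nonnegative, not identically `0`, zero set
unbounded below, `t ↦ e^{−t²}P(t)` integrable, `I = ∫_ℝ e^{−t²}P(t) dt` and
`c₁(x) = −∫_{−∞}^x e^{−t²}P(t) dt`: `c₁` is antitone, `c₁ < 0` everywhere,
`c₁ → 0` at `−∞`, `c₁ → −I` at `+∞`, and the critical set `{x | c₁′(x) = 0}` equals
`{x | P(x) = 0}`, which is a closed and discrete subset of `ℝ`. -/
theorem stmt10 (P : ℝ → ℝ) (hP : AnalyticOnNhd ℝ P Set.univ)
    (hP0 : ∀ x : ℝ, 0 ≤ P x) (hPne : ∃ x : ℝ, P x ≠ 0)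
    (hzero : ¬ BddBelow {x : ℝ | P x = 0})
    (hInt : Integrable (fun t : ℝ => Real.exp (-t ^ 2) * P t))
    (I : ℝ) (hI : I = ∫ t : ℝ, Real.exp (-t ^ 2) * P t)
    (c₁ : ℝ → ℝ) (hc₁ : ∀ x : ℝ, c₁ x = -∫ t in Set.Iic x, Real.exp (-t ^ 2) * P t) :
    Antitone c₁ ∧ (∀ x : ℝ, c₁ x < 0) ∧
      Tendsto c₁ atBot (nhds 0) ∧ Tendsto c₁ atTop (nhds (-I)) ∧
      {x : ℝ | deriv c₁ x = 0} = {x : ℝ | P x = 0} ∧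
      (∀ y : ℝ, ¬ AccPt y (𝓟 {x : ℝ | P x = 0})) := by
  set f : ℝ → ℝ := fun t => Real.exp (-t ^ 2) * P t with hf
  have hf0 : ∀ t, 0 ≤ f t := fun t => mul_nonneg (Real.exp_pos _).le (hP0 t)
  have hfc : Continuous f := by
    have hPc : Continuous P := hP.continuousOn.restrict.comp
      (continuous_id.subtype_mk (fun x => Set.mem_univ x))
    exact (Real.continuous_exp.comp (continuous_pow 2).neg).mul hPc
  -- no accumulation points of the zero set
  have hacc : ∀ y : ℝ, ¬ AccPt y (𝓟 {x : ℝ | P x = 0}) := by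
    intro y hy
    have hfreq : ∃ᶠ z in nhdsWithin y {y}ᶜ, P z = 0 := by
      rw [frequently_iff_neBot]; exact hy
    have := hP.eqOn_zero_of_preconnected_of_frequently_eq_zero isPreconnected_univ
      (Set.mem_univ y) hfreq
    obtain ⟨x, hx⟩ := hPne
    exact hx (this (Set.mem_univ x))
  -- zero set is countable
  have hZc : Set.Countable {x : ℝ | P x = 0} := by
    have : {x : ℝ | P x = 0} = ⋃ n : ℕ, {x : ℝ | P x = 0} ∩ Set.Icc (-(n : ℝ)) n := by
      ext x
      simp only [Set.mem_iUnion, Set.mem_inter_iff, Set.mem_setOf_eq, Set.mem_Icc]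
      constructor
      · intro hx
        obtain ⟨n, hn⟩ := exists_nat_ge |x|
        exact ⟨n, hx, (abs_le.1 hn).1, (abs_le.1 hn).2⟩
      · exact fun ⟨n, h, _⟩ => h
    rw [this]
    refine Set.countable_iUnion fun n => Set.Finite.countable ?_
    by_contra hinf
    obtain ⟨x, -, hx⟩ := Set.Infinite.exists_accPt_of_subset_isCompact hinf isCompact_Icc
      Set.inter_subset_right
    exact hacc x (hx.mono (principal_mono.2 Set.inter_subset_left))
  have hZ0 : MeasureTheory.volume {x : ℝ | P x = 0} = 0 := hZc.measure_zero _
  -- antitone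
  have hmono : Antitone c₁ := by
    intro x y hxy
    rw [hc₁ x, hc₁ y, neg_le_neg_iff]
    exact setIntegral_mono_set hInt.integrableOn
      (Filter.Eventually.of_forall hf0) (HasSubset.Subset.eventuallyLE (Set.Iic_subset_Iic.2 hxy))
  -- negativity
  have hneg : ∀ x : ℝ, c₁ x < 0 := by
    intro x
    rw [hc₁ x, neg_lt_zero]
    rw [setIntegral_pos_iff_support_of_nonneg_ae
      (Filter.Eventually.of_forall hf0 : 0 ≤ᵐ[MeasureTheory.volume.restrict (Set.Iic x)] f)
      hInt.integrableOn]
    have hsupp : {x : ℝ | P x = 0}ᶜ ⊆ Function.support f := by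
      intro t ht
      simp only [Set.mem_compl_iff, Set.mem_setOf_eq] at ht
      exact fun h0 => ht (by
        have := mul_eq_zero.1 h0
        rcases this with h | h
        · exact absurd h (Real.exp_ne_zero _)
        · exact h)
    by_contra hle
    push_neg at hle
    have h0 : MeasureTheory.volume (Function.support f ∩ Set.Iic x) = 0 := le_antisymm hle bot_le
    have : MeasureTheory.volume (Set.Iic x) ≤
        MeasureTheory.volume {x : ℝ | P x = 0} +
          MeasureTheory.volume (Function.support f ∩ Set.Iic x) := by
      refine le_trans (measure_mono ?_) (measure_union_le _ _)
      intro t ht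
      by_cases hP' : P t = 0
      · exact Or.inl hP'
      · exact Or.inr ⟨hsupp hP', ht⟩
    rw [hZ0, h0, add_zero] at this
    simp [Real.volume_Iic] at this
  -- limits
  have hcover_top : AECover MeasureTheory.volume atTop (fun x : ℝ => Set.Iic x) :=
    aecover_Iic tendsto_id
  have htop : Tendsto (fun x : ℝ => ∫ t in Set.Iic x, f t) atTop (nhds I) := by
    rw [hI]
    exact hcover_top.integral_tendsto_of_countably_generated hInt
  have htop' : Tendsto c₁ atTop (nhds (-I)) := by
    have := htop.neg
    refine this.congr fun x => ?_
    rw [hc₁ x]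
  have hcover_bot : AECover MeasureTheory.volume atBot (fun x : ℝ => Set.Ici x) :=
    aecover_Ici tendsto_id
  have hbotI : Tendsto (fun x : ℝ => ∫ t in Set.Ici x, f t) atBot (nhds I) := by
    rw [hI]
    exact hcover_bot.integral_tendsto_of_countably_generated hInt
  have hsplit : ∀ x : ℝ, (∫ t in Set.Iic x, f t) + ∫ t in Set.Ioi x, f t = ∫ t, f t :=
    fun x => intervalIntegral.integral_Iic_add_Ioi hInt.integrableOn hInt.integrableOn
  have hIoiIci : ∀ x : ℝ, (∫ t in Set.Ioi x, f t) = ∫ t in Set.Ici x, f t := by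
    intro x
    exact (integral_Ici_eq_integral_Ioi).symm
  have hbot : Tendsto c₁ atBot (nhds 0) := by
    have : ∀ x : ℝ, c₁ x = (∫ t in Set.Ici x, f t) - ∫ t, f t := by
      intro x
      rw [hc₁ x, ← hIoiIci x, ← hsplit x]
      ring
    have h := hbotI.sub (tendsto_const_nhds (x := ∫ t, f t) (f := atBot))
    rw [hI, sub_self] at h
    exact h.congr fun x => (this x).symm
  -- derivative
  have hderiv : ∀ x : ℝ, HasDerivAt c₁ (-(f x)) x := by
    intro x
    have hFrep : ∀ u : ℝ, (∫ t in Set.Iic u, f t) =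
        (∫ t in Set.Iic (0:ℝ), f t) + ∫ t in (0:ℝ)..u, f t := by
      intro u
      have h := intervalIntegral.integral_Iic_sub_Iic (a := (0:ℝ)) (b := u)
        hInt.integrableOn hInt.integrableOn
      linarith
    have hD : HasDerivAt (fun u : ℝ => ∫ t in (0:ℝ)..u, f t) (f x) x := by
      exact intervalIntegral.integral_hasDerivAt_right
        (hInt.intervalIntegrable)
        (hfc.stronglyMeasurableAtFilter _ _)
        hfc.continuousAt
    have hD2 : HasDerivAt (fun u : ℝ => (∫ t in Set.Iic (0:ℝ), f t) + ∫ t in (0:ℝ)..u, f t)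
        (f x) x := (hD.const_add _)
    have hD3 : HasDerivAt (fun u : ℝ => ∫ t in Set.Iic u, f t) (f x) x := by
      exact hD2.congr_of_eventuallyEq (Filter.Eventually.of_forall fun u => hFrep u)
    have : HasDerivAt (fun u => -∫ t in Set.Iic u, f t) (-(f x)) x := hD3.neg
    exact this.congr_of_eventuallyEq (Filter.Eventually.of_forall fun u => (hc₁ u))
  have hcrit : {x : ℝ | deriv c₁ x = 0} = {x : ℝ | P x = 0} := by
    ext x
    rw [Set.mem_setOf_eq, (hderiv x).deriv, Set.mem_setOf_eq, neg_eq_zero]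
    constructor
    · intro h
      rcases mul_eq_zero.1 h with h | h
      · exact absurd h (Real.exp_ne_zero _)
      · exact h
    · intro h; simp [hf, h]
  exact ⟨hmono, hneg, hbot, htop', hcrit, hacc⟩
end

section
/- The value 0 does not belong to the set of critical values c₁({x : P(x) = 0}) of c₁, but 0 belongs to its closure; in particular, the set of critical values of c₁ is not closed in ℝ. -/
/-!
The integrand `e^{-t²} P(t)` is continuous and nonnegative, and by the identity theorem the
analytic function `P` cannot vanish on any half-line `(-∞, x)`; hence every integral
`∫_{-∞}^x e^{-t²} P` is positive and `c₁ < 0` everywhere. On the other hand `c₁(x) → 0` as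
`x → -∞`, and the zeros of `P` accumulate at `-∞`, so `0` is a limit of critical values.
-/

open Filter MeasureTheory Set Topology

theorem AnalyticOnNhd.exists_ne_zero_of_isOpen {𝕜 E F : Type*} [NontriviallyNormedField 𝕜]
    [NormedAddCommGroup E] [NormedSpace 𝕜 E] [PreconnectedSpace E]
    [NormedAddCommGroup F] [NormedSpace 𝕜 F] {f : E → F} (hf : AnalyticOnNhd 𝕜 f univ)
    (hne : ∃ x, f x ≠ 0) {U : Set E} (hU : IsOpen U) (hUne : U.Nonempty) :
    ∃ y ∈ U, f y ≠ 0 := by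
  by_contra! hU0
  obtain ⟨z, hz⟩ := hUne
  obtain ⟨x, hx⟩ := hne
  exact hx (hf.eqOn_zero_of_preconnected_of_eventuallyEq_zero isPreconnected_univ (mem_univ z)
    (eventually_of_mem (hU.mem_nhds hz) hU0) (mem_univ x))

theorem setIntegral_pos_of_continuous_of_ne_zero {X : Type*} [TopologicalSpace X]
    [MeasurableSpace X] [OpensMeasurableSpace X] {μ : Measure X} [μ.IsOpenPosMeasure]
    {f : X → ℝ} {s U : Set X} {y : X} (hf : Continuous f) (hf0 : 0 ≤ f)
    (hfi : IntegrableOn f s μ) (hU : IsOpen U) (hUs : U ⊆ s) (hy : y ∈ U) (hfy : f y ≠ 0) :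
    0 < ∫ x in s, f x ∂μ := by
  rw [setIntegral_pos_iff_support_of_nonneg_ae (ae_of_all _ hf0) hfi]
  exact ((hf.isOpen_support.inter hU).measure_pos μ ⟨y, hfy, hy⟩).trans_le
    (measure_mono (inter_subset_inter_right _ hUs))

theorem stmt11_general (P : ℝ → ℝ) (hP : AnalyticOnNhd ℝ P Set.univ)
    (hP0 : ∀ x : ℝ, 0 ≤ P x) (hPne : ∃ x : ℝ, P x ≠ 0)
    (hzero : ¬ BddBelow {x : ℝ | P x = 0})
    (hInt : Integrable (fun t : ℝ => Real.exp (-t ^ 2) * P t))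
    (c₁ : ℝ → ℝ) (hc₁ : ∀ x : ℝ, c₁ x = -∫ t in Set.Iic x, Real.exp (-t ^ 2) * P t) :
    0 ∉ c₁ '' {x : ℝ | P x = 0} ∧ (0 : ℝ) ∈ closure (c₁ '' {x : ℝ | P x = 0}) ∧
      ¬ IsClosed (c₁ '' {x : ℝ | P x = 0}) := by
  have hc₁_neg (x : ℝ) : c₁ x < 0 := by
    obtain ⟨y, hyx, hPy⟩ := hP.exists_ne_zero_of_isOpen hPne isOpen_Iio nonempty_Iio
    rw [hc₁ x, neg_neg_iff_pos]
    have hPc : Continuous P := continuousOn_univ.1 hP.continuousOn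
    refine setIntegral_pos_of_continuous_of_ne_zero (by fun_prop) ?_ hInt.integrableOn
      isOpen_Iio Iio_subset_Iic_self hyx (mul_ne_zero (Real.exp_ne_zero _) hPy)
    exact fun t => mul_nonneg (Real.exp_nonneg _) (hP0 t)
  have hc₁_atBot : Tendsto c₁ atBot (𝓝 0) := by
    simpa [funext hc₁] using (tendsto_integral_Iic_zero (f := fun t => Real.exp (-t ^ 2) * P t)
      (μ := volume) tendsto_id).neg
  have hzeros_atBot : ∃ᶠ x in atBot, c₁ x ∈ c₁ '' {x : ℝ | P x = 0} :=
    frequently_atBot'.2 fun a => by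
      obtain ⟨y, hPy, hya⟩ := not_bddBelow_iff.1 hzero a
      exact ⟨y, hya, mem_image_of_mem c₁ hPy⟩
  have h0_notMem : 0 ∉ c₁ '' {x : ℝ | P x = 0} := fun ⟨x, _, hx⟩ => (hc₁_neg x).ne hx
  have h0_mem : (0 : ℝ) ∈ closure (c₁ '' {x : ℝ | P x = 0}) :=
    mem_closure_of_frequently_of_tendsto hzeros_atBot hc₁_atBot
  exact ⟨h0_notMem, h0_mem, fun hcl => h0_notMem (hcl.closure_subset h0_mem)⟩

/-- With `P` and `c₁` as before, `0` does not belong to the set of critical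
values `c₁({x | P(x) = 0})` of `c₁`, but `0` belongs to its closure; in particular, the set
of critical values of `c₁` is not closed in `ℝ`. -/
theorem stmt11 (P : ℝ → ℝ) (hP : AnalyticOnNhd ℝ P Set.univ)
    (hP0 : ∀ x : ℝ, 0 ≤ P x) (hPne : ∃ x : ℝ, P x ≠ 0)
    (hzero : ¬ BddBelow {x : ℝ | P x = 0})
    (hInt : Integrable (fun t : ℝ => Real.exp (-t ^ 2) * P t))
    (I : ℝ) (hI : I = ∫ t : ℝ, Real.exp (-t ^ 2) * P t)
    (c₁ : ℝ → ℝ) (hc₁ : ∀ x : ℝ, c₁ x = -∫ t in Set.Iic x, Real.exp (-t ^ 2) * P t) :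
    0 ∉ c₁ '' {x : ℝ | P x = 0} ∧ (0 : ℝ) ∈ closure (c₁ '' {x : ℝ | P x = 0}) ∧
      ¬ IsClosed (c₁ '' {x : ℝ | P x = 0}) :=
  stmt11_general P hP hP0 hPne hzero hInt c₁ hc₁
end

section
/- The set of critical values c₁({x : P(x) = 0}) is a discrete and closed subset of the subspace ℝ ∖ {0, −I}; that is, every accumulation point in ℝ of the set of critical values of c₁ lies in {0, −I}, and no critical value is an accumulation point of the set of critical values. -/
/-!
`c₁` is continuous and strictly decreasing: the integrand `e^{-t²} P(t)` is continuous,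
nonnegative, and vanishes only on the zero set `Z` of `P`, which is discrete by the identity
theorem, so it is positive somewhere in every interval.
Its limits at `∓∞` are `0` and `-I`, so its range lies between `(-I, 0)` and `[-I, 0]`.
A continuous strictly monotone map of `ℝ` is open, so an accumulation point of `c₁(Z)` of the
form `c₁(x)` would make `x` an accumulation point of `Z`. Hence accumulation points of `c₁(Z)`
lie in `[-I, 0] \ (-I, 0) = {-I, 0}`.
-/

open Set Function Topology Filter MeasureTheory

theorem IsOpenMap.accPt_of_accPt_image {X Y : Type*} [TopologicalSpace X] [TopologicalSpace Y]
    {f : X → Y} (hf : IsOpenMap f) (hinj : Injective f) {s : Set X} {x : X}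
    (h : AccPt (f x) (𝓟 (f '' s))) : AccPt x (𝓟 s) := by
  simpa only [comap_principal, hinj.preimage_image] using hf.accPt_comap h

theorem Continuous.Ioo_subset_range_of_tendsto {X δ : Type*} [TopologicalSpace X]
    [PreconnectedSpace X] [LinearOrder δ] [TopologicalSpace δ] [OrderTopology δ] {f : X → δ}
    (hf : Continuous f) {l₁ l₂ : Filter X} [l₁.NeBot] [l₂.NeBot] {a b : δ}
    (h₁ : Tendsto f l₁ (𝓝 a)) (h₂ : Tendsto f l₂ (𝓝 b)) : Ioo a b ⊆ range f := fun _ hc =>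
  mem_range_of_exists_le_of_exists_ge hf (h₁.eventually (ge_mem_nhds hc.1)).exists
    (h₂.eventually (le_mem_nhds hc.2)).exists

theorem dense_compl_of_forall_not_accPt {X : Type*} [TopologicalSpace X]
    [∀ x : X, (𝓝[≠] x).NeBot] {s : Set X} (h : ∀ x, ¬AccPt x (𝓟 s)) : Dense sᶜ := by
  rw [← interior_eq_empty_iff_dense_compl, eq_empty_iff_forall_notMem]
  intro x hx
  exact h x <| accPt_iff_frequently_nhdsNE.2
    (eventually_nhdsWithin_of_eventually_nhds (mem_interior_iff_mem_nhds.1 hx)).frequently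

theorem AnalyticOnNhd.not_accPt_setOf_eq_zero {𝕜 E : Type*} [NontriviallyNormedField 𝕜]
    [PreconnectedSpace 𝕜] [NormedAddCommGroup E] [NormedSpace 𝕜 E] {f : 𝕜 → E}
    (hf : AnalyticOnNhd 𝕜 f univ) (hne : ∃ x, f x ≠ 0) (z : 𝕜) :
    ¬AccPt z (𝓟 {x | f x = 0}) := fun hz =>
  let ⟨x, hx⟩ := hne
  hx <| hf.eqOn_zero_of_preconnected_of_frequently_eq_zero isPreconnected_univ (mem_univ z)
    (accPt_iff_frequently_nhdsNE.1 hz) (mem_univ x)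

section StrictAnti

variable {α δ : Type*} [ConditionallyCompleteLinearOrder α] [TopologicalSpace α] [OrderTopology α]
  [DenselyOrdered α] [NoMinOrder α] [NoMaxOrder α] [LinearOrder δ] [TopologicalSpace δ]
  [OrderTopology δ] {f : α → δ}

theorem StrictAnti.isOpenMap_of_continuous (hf : StrictAnti f) (hc : Continuous f) :
    IsOpenMap f := by
  refine IsOpenMap.of_nhds_le fun x s hs => ?_
  obtain ⟨l, u, ⟨hlx, hxu⟩, hsub⟩ := mem_nhds_iff_exists_Ioo_subset.1 (mem_map.1 hs)
  have himage : Ioo (f u) (f l) ⊆ s := fun y hy => by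
    obtain ⟨z, hz, rfl⟩ := intermediate_value_Ioo' (hlx.trans hxu).le hc.continuousOn hy
    exact hsub hz
  exact mem_of_superset (Ioo_mem_nhds (hf hxu) (hf hlx)) himage

theorem StrictAnti.accPt_of_accPt_image (hf : StrictAnti f) (hc : Continuous f) {s : Set α}
    {x : α} (h : AccPt (f x) (𝓟 (f '' s))) : AccPt x (𝓟 s) :=
  (hf.isOpenMap_of_continuous hc).accPt_of_accPt_image hf.injective h

theorem StrictAnti.eq_or_eq_of_accPt_image [Nonempty α] (hf : StrictAnti f) (hc : Continuous f)
    {a b : δ} (htop : Tendsto f atTop (𝓝 a)) (hbot : Tendsto f atBot (𝓝 b)) {s : Set α}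
    (hs : ∀ x, ¬AccPt x (𝓟 s)) {y : δ} (hy : AccPt y (𝓟 (f '' s))) : y = a ∨ y = b := by
  have hrange : range f ⊆ Icc a b := range_subset_iff.2 fun x =>
    ⟨hf.antitone.le_of_tendsto htop x, hf.antitone.ge_of_tendsto hbot x⟩
  have hyIcc : y ∈ Icc a b :=
    closure_minimal ((image_subset_range _ _).trans hrange) isClosed_Icc
      (mem_closure_iff_clusterPt.2 hy.clusterPt)
  by_cases hyIoo : y ∈ Ioo a b
  · obtain ⟨x, rfl⟩ := hc.Ioo_subset_range_of_tendsto htop hbot hyIoo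
    exact absurd (hf.accPt_of_accPt_image hc hy) (hs x)
  · have hy' : y ∈ Icc a b \ Ioo a b := ⟨hyIcc, hyIoo⟩
    rwa [Icc_sdiff_Ioo_same (hyIcc.1.trans hyIcc.2)] at hy'

end StrictAnti

section IntegralIic

variable {E : Type*} [NormedAddCommGroup E] [NormedSpace ℝ E] {f : ℝ → E}

theorem continuous_integral_Iic (hf : Integrable f) :
    Continuous fun x => ∫ t in Iic x, f t := by
  have h : (fun x => ∫ t in Iic x, f t) = fun x => (∫ t in Iic 0, f t) + ∫ t in 0..x, f t :=
    funext fun x => by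
      rw [← intervalIntegral.integral_Iic_sub_Iic hf.integrableOn hf.integrableOn,
        add_sub_cancel]
  rw [h]
  exact continuous_const.add (hf.continuous_primitive 0)

theorem tendsto_integral_Iic_atTop (hf : Integrable f) :
    Tendsto (fun x => ∫ t in Iic x, f t) atTop (𝓝 (∫ t, f t)) :=
  (aecover_Iic tendsto_id).integral_tendsto_of_countably_generated hf

end IntegralIic

theorem strictMono_integral_Iic {f : ℝ → ℝ} (hfi : Integrable f) (hfc : Continuous f)
    (hf0 : 0 ≤ f) (hf : Dense (support f)) : StrictMono fun x => ∫ t in Iic x, f t := by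
  intro a b hab
  show ∫ t in Iic a, f t < ∫ t in Iic b, f t
  rw [← sub_pos, intervalIntegral.integral_Iic_sub_Iic hfi.integrableOn hfi.integrableOn]
  obtain ⟨c, hc, hcab⟩ := hf.exists_between hab
  exact intervalIntegral.integral_pos hab hfc.continuousOn (fun t _ => hf0 t)
    ⟨c, Ioo_subset_Icc_self hcab, (hf0 c).lt_of_ne' hc⟩

theorem stmt12_general (P : ℝ → ℝ) (hP : AnalyticOnNhd ℝ P Set.univ)
    (hP0 : ∀ x : ℝ, 0 ≤ P x) (hPne : ∃ x : ℝ, P x ≠ 0)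
    (hInt : Integrable (fun t : ℝ => Real.exp (-t ^ 2) * P t))
    (I : ℝ) (hI : I = ∫ t : ℝ, Real.exp (-t ^ 2) * P t)
    (c₁ : ℝ → ℝ) (hc₁ : ∀ x : ℝ, c₁ x = -∫ t in Set.Iic x, Real.exp (-t ^ 2) * P t) :
    (∀ y : ℝ, AccPt y (𝓟 (c₁ '' {x : ℝ | P x = 0})) → y = 0 ∨ y = -I) ∧
      (∀ y ∈ c₁ '' {x : ℝ | P x = 0}, ¬ AccPt y (𝓟 (c₁ '' {x : ℝ | P x = 0}))) := by
  set f := fun t : ℝ => Real.exp (-t ^ 2) * P t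
  set F := fun x => ∫ t in Iic x, f t
  obtain rfl : c₁ = -F := funext hc₁
  have hZ := hP.not_accPt_setOf_eq_zero hPne
  have hfc : Continuous f := by
    have hPc : Continuous P := continuousOn_univ.1 hP.continuousOn
    fun_prop
  have hsupp : Dense (support f) :=
    (dense_compl_of_forall_not_accPt hZ).mono fun t ht => mul_ne_zero (Real.exp_pos _).ne' ht
  have hanti : StrictAnti (-F) := (strictMono_integral_Iic hInt hfc
    (fun t => mul_nonneg (Real.exp_pos _).le (hP0 t)) hsupp).neg
  have hcont : Continuous (-F) := (continuous_integral_Iic hInt).neg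
  have htop : Tendsto (-F) atTop (𝓝 (-I)) := hI ▸ (tendsto_integral_Iic_atTop hInt).neg
  have hbot : Tendsto (-F) atBot (𝓝 0) := by
    rw [← neg_zero]
    exact (tendsto_integral_Iic_zero tendsto_id).neg
  refine ⟨fun y hy => (hanti.eq_or_eq_of_accPt_image hcont htop hbot hZ hy).symm, ?_⟩
  rintro _ ⟨x, -, rfl⟩ hx
  exact hZ x (hanti.accPt_of_accPt_image hcont hx)

/-- With `P` and `c₁` as before, the set of critical values
`c₁({x | P(x) = 0})` is a discrete and closed subset of the subspace `ℝ ∖ {0, −I}`: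
every accumulation point in `ℝ` of the set of critical values lies in `{0, −I}`, and no
critical value is an accumulation point of the set of critical values. -/
theorem stmt12 (P : ℝ → ℝ) (hP : AnalyticOnNhd ℝ P Set.univ)
    (hP0 : ∀ x : ℝ, 0 ≤ P x) (hPne : ∃ x : ℝ, P x ≠ 0)
    (hzero : ¬ BddBelow {x : ℝ | P x = 0})
    (hInt : Integrable (fun t : ℝ => Real.exp (-t ^ 2) * P t))
    (I : ℝ) (hI : I = ∫ t : ℝ, Real.exp (-t ^ 2) * P t)
    (c₁ : ℝ → ℝ) (hc₁ : ∀ x : ℝ, c₁ x = -∫ t in Set.Iic x, Real.exp (-t ^ 2) * P t) :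
    (∀ y : ℝ, AccPt y (𝓟 (c₁ '' {x : ℝ | P x = 0})) → y = 0 ∨ y = -I) ∧
      (∀ y ∈ c₁ '' {x : ℝ | P x = 0}, ¬ AccPt y (𝓟 (c₁ '' {x : ℝ | P x = 0}))) :=
  stmt12_general P hP hP0 hPne hInt I hI c₁ hc₁
end

section
/- The function c₁ is monotone nonincreasing on (−∞, t_Q] and monotone nondecreasing on [t_Q, ∞); c₁(x) → 0 as x → −∞ and c₁(x) → −I as x → +∞; the critical set {x : c₁′(x) = 0} equals the zero set {x : Q(x) = 0}; the set of critical values c₁({x : Q(x) = 0}) is a discrete and closed subset of the subspace ℝ ∖ {0, −I}; and both 0 and −I lie in the closure of the set of critical values. -/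
open Filter MeasureTheory

/-- A finite set has no accumulation points in a T1 space. -/
lemma stmt15_finite_not_accPt {F : Set ℝ} (hF : F.Finite) (y : ℝ) : ¬ AccPt y (𝓟 F) := by
  intro h
  rw [accPt_iff_nhds] at h
  have hcl : IsClosed (F \ {y}) := (hF.subset Set.diff_subset).isClosed
  have hU : (F \ {y})ᶜ ∈ nhds y := hcl.isOpen_compl.mem_nhds (by simp)
  obtain ⟨z, ⟨hzU, hzF⟩, hzy⟩ := h _ hU
  exact hzU ⟨hzF, hzy⟩

/-- With `Q` real analytic, `Q ≥ 0` on `(−∞, t_Q]`, `Q ≤ 0` on `[t_Q, ∞)`,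
`Q` not identically `0` on either ray, zero set unbounded below and above,
`t ↦ e^{−t²}Q(t)` integrable and `I = ∫_ℝ e^{−t²}Q(t) dt ≥ 0`, and
`c₁(x) = −∫_{−∞}^x e^{−t²}Q(t) dt`: `c₁` is nonincreasing on `(−∞, t_Q]` and
nondecreasing on `[t_Q, ∞)`; `c₁ → 0` at `−∞` and `c₁ → −I` at `+∞`; the critical set
equals the zero set of `Q`; the set of critical values is a discrete and closed subset of
the subspace `ℝ ∖ {0, −I}`; and both `0` and `−I` lie in the closure of the set of
critical values. -/
theorem stmt15 (Q : ℝ → ℝ) (hQ : AnalyticOnNhd ℝ Q Set.univ) (tQ : ℝ)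
    (hQpos : ∀ x : ℝ, x ≤ tQ → 0 ≤ Q x) (hQneg : ∀ x : ℝ, tQ ≤ x → Q x ≤ 0)
    (hQne₁ : ∃ x : ℝ, x ≤ tQ ∧ Q x ≠ 0) (hQne₂ : ∃ x : ℝ, tQ ≤ x ∧ Q x ≠ 0)
    (hzb : ¬ BddBelow {x : ℝ | Q x = 0}) (hza : ¬ BddAbove {x : ℝ | Q x = 0})
    (hInt : Integrable (fun t : ℝ => Real.exp (-t ^ 2) * Q t))
    (I : ℝ) (hI : I = ∫ t : ℝ, Real.exp (-t ^ 2) * Q t) (hI0 : 0 ≤ I)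
    (c₁ : ℝ → ℝ) (hc₁ : ∀ x : ℝ, c₁ x = -∫ t in Set.Iic x, Real.exp (-t ^ 2) * Q t) :
    AntitoneOn c₁ (Set.Iic tQ) ∧ MonotoneOn c₁ (Set.Ici tQ) ∧
      Tendsto c₁ atBot (nhds 0) ∧ Tendsto c₁ atTop (nhds (-I)) ∧
      {x : ℝ | deriv c₁ x = 0} = {x : ℝ | Q x = 0} ∧
      (∀ y : ℝ, y ∉ ({0, -I} : Set ℝ) → ¬ AccPt y (𝓟 (c₁ '' {x : ℝ | Q x = 0}))) ∧
      (0 : ℝ) ∈ closure (c₁ '' {x : ℝ | Q x = 0}) ∧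
      -I ∈ closure (c₁ '' {x : ℝ | Q x = 0}) := by
  set f : ℝ → ℝ := fun t => Real.exp (-t ^ 2) * Q t with hf
  have hQcont : Continuous Q :=
    continuous_iff_continuousAt.2 fun x => (hQ x trivial).continuousAt
  have hfc : Continuous f := by
    exact (Real.continuous_exp.comp (by continuity)).mul hQcont
  set g : ℝ → ℝ := fun x => ∫ t in Set.Iic x, f t with hg
  have hdiff : ∀ a b : ℝ, g b - g a = ∫ t in a..b, f t := fun a b =>
    intervalIntegral.integral_Iic_sub_Iic hInt.integrableOn hInt.integrableOn
  -- monotonicity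
  have hanti : AntitoneOn c₁ (Set.Iic tQ) := by
    intro x hx y hy hxy
    rw [hc₁ x, hc₁ y, neg_le_neg_iff]
    have h0 : 0 ≤ ∫ t in x..y, f t := by
      apply intervalIntegral.integral_nonneg hxy
      intro u hu
      exact mul_nonneg (Real.exp_pos _).le (hQpos u (hu.2.trans hy))
    have := hdiff x y
    simp only [hg] at this
    linarith
  have hmono : MonotoneOn c₁ (Set.Ici tQ) := by
    intro x hx y hy hxy
    rw [hc₁ x, hc₁ y, neg_le_neg_iff]
    have h0 : (∫ t in x..y, f t) ≤ 0 := by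
      have h0' : 0 ≤ ∫ t in x..y, (fun u => -(f u)) t := by
        apply intervalIntegral.integral_nonneg hxy
        intro u hu
        simp only [hf, neg_nonneg]
        exact mul_nonpos_of_nonneg_of_nonpos (Real.exp_pos _).le (hQneg u (le_trans hx hu.1))
      rw [intervalIntegral.integral_neg] at h0'
      linarith
    have := hdiff x y
    simp only [hg] at this
    linarith
  -- tendsto at top
  have hgtop : Tendsto g atTop (nhds I) := by
    have := tendsto_setIntegral_of_monotone (μ := volume) (f := f) (s := fun x : ℝ => Set.Iic x)
      (fun i => measurableSet_Iic) (fun a b hab => Set.Iic_subset_Iic.2 hab)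
      (by rw [Set.iUnion_Iic]; exact hInt.integrableOn)
    rw [Set.iUnion_Iic, setIntegral_univ] at this
    rwa [hI]
  have htop : Tendsto c₁ atTop (nhds (-I)) := by
    have : Tendsto (fun x => -g x) atTop (nhds (-I)) := hgtop.neg
    refine this.congr fun x => ?_
    rw [hc₁ x]
  -- tendsto at bot
  have hgbot : Tendsto g atBot (nhds 0) := by
    have h1 : Tendsto (fun x : ℝ => g (-x)) atTop (nhds 0) := by
      have := tendsto_setIntegral_of_antitone (μ := volume) (f := f)
        (s := fun x : ℝ => Set.Iic (-x))
        (fun i => measurableSet_Iic)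
        (fun a b hab => Set.Iic_subset_Iic.2 (neg_le_neg hab))
        ⟨0, hInt.integrableOn⟩
      have hempty : (⋂ x : ℝ, Set.Iic (-x)) = ∅ := by
        ext y
        simp only [Set.mem_iInter, Set.mem_Iic, Set.mem_empty_iff_false, iff_false, not_forall]
        exact ⟨1 - y, by push_neg; linarith⟩
      rwa [hempty, Measure.restrict_empty, integral_zero_measure] at this
    have h2 : Tendsto (fun x : ℝ => -x) atBot (atTop : Filter ℝ) := tendsto_neg_atBot_atTop
    have := h1.comp h2
    refine this.congr fun x => ?_
    simp
  have hbot : Tendsto c₁ atBot (nhds 0) := by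
    have : Tendsto (fun x => -g x) atBot (nhds (-0)) := hgbot.neg
    rw [neg_zero] at this
    refine this.congr fun x => ?_
    rw [hc₁ x]
  -- derivative
  have hderiv : ∀ x : ℝ, HasDerivAt c₁ (-(f x)) x := by
    intro x
    have hD : HasDerivAt (fun u => ∫ t in (0:ℝ)..u, f t) (f x) x :=
      intervalIntegral.integral_hasDerivAt_right (hfc.intervalIntegrable _ _)
        (hfc.stronglyMeasurableAtFilter _ _) hfc.continuousAt
    have : HasDerivAt (fun u => -(g 0) - ∫ t in (0:ℝ)..u, f t) (-(f x)) x := hD.const_sub _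
    refine this.congr_of_eventuallyEq (Eventually.of_forall fun u => ?_)
    have := hdiff 0 u
    rw [hc₁ u]
    simp only [hg] at this ⊢
    linarith
  have hcrit : {x : ℝ | deriv c₁ x = 0} = {x : ℝ | Q x = 0} := by
    ext x
    simp only [Set.mem_setOf_eq, (hderiv x).deriv, hf, neg_eq_zero, mul_eq_zero]
    constructor
    · rintro (h | h)
      · exact absurd h (Real.exp_ne_zero _)
      · exact h
    · exact fun h => Or.inr h
  -- zero set has no accumulation points
  set Z : Set ℝ := {x : ℝ | Q x = 0} with hZ
  have hQnz : ∃ x, Q x ≠ 0 := hQne₁.imp fun x h => h.2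
  have hZacc : ∀ z : ℝ, ¬ AccPt z (𝓟 Z) := by
    intro z hacc
    have hev : ∀ᶠ x in nhdsWithin z {z}ᶜ, Q x ≠ 0 := by
      by_cases hz : Q z = 0
      · rcases (hQ z trivial).eventually_eq_zero_or_eventually_ne_zero with h | h
        · obtain ⟨x, hx⟩ := hQnz
          exact absurd (hQ.eqOn_zero_of_preconnected_of_eventuallyEq_zero isPreconnected_univ
            trivial h trivial) hx
        · exact h
      · exact ((hQcont.continuousAt (x := z)).eventually_ne hz).filter_mono
          nhdsWithin_le_nhds
    rw [AccPt] at hacc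
    have : (∅ : Set ℝ) ∈ nhdsWithin z {z}ᶜ ⊓ 𝓟 Z := by
      refine Filter.mem_of_superset
        (Filter.inter_mem (Filter.mem_inf_of_left hev)
          (Filter.mem_inf_of_right (Filter.mem_principal_self Z))) ?_
      intro x hx
      exact (hx.1 hx.2).elim
    exact hacc.ne (Filter.empty_mem_iff_bot.1 this)
  have hfin : ∀ A B : ℝ, (Z ∩ Set.Icc A B).Finite := by
    intro A B
    by_contra hinf
    have hinf' : (Z ∩ Set.Icc A B).Infinite := hinf
    obtain ⟨z, _, hz⟩ := hinf'.exists_accPt_of_subset_isCompact isCompact_Icc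
      Set.inter_subset_right
    exact hZacc z (hz.mono (principal_mono.2 Set.inter_subset_left))
  -- no accumulation points away from 0 and -I
  have hnacc : ∀ y : ℝ, y ∉ ({0, -I} : Set ℝ) → ¬ AccPt y (𝓟 (c₁ '' Z)) := by
    intro y hy hacc
    simp only [Set.mem_insert_iff, Set.mem_singleton_iff, not_or] at hy
    set ε : ℝ := min (dist y 0) (dist y (-I)) / 2 with hε
    have hεpos : 0 < ε := by
      have h1 : 0 < dist y 0 := dist_pos.2 hy.1
      have h2 : 0 < dist y (-I) := dist_pos.2 hy.2
      positivity
    obtain ⟨A, hA⟩ : ∃ A : ℝ, ∀ x ≤ A, dist (c₁ x) 0 < ε :=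
      eventually_atBot.1 (hbot.eventually (Metric.ball_mem_nhds 0 hεpos))
    obtain ⟨B, hB⟩ : ∃ B : ℝ, ∀ x ≥ B, dist (c₁ x) (-I) < ε :=
      eventually_atTop.1 (htop.eventually (Metric.ball_mem_nhds (-I) hεpos))
    have hsub : c₁ '' Z ∩ Metric.ball y ε ⊆ c₁ '' (Z ∩ Set.Icc A B) := by
      rintro v ⟨⟨z, hzZ, rfl⟩, hv⟩
      refine ⟨z, ⟨hzZ, ?_, ?_⟩, rfl⟩
      · by_contra h
        push_neg at h
        have h1 : dist (c₁ z) 0 < ε := hA z h.le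
        have : dist y 0 < 2 * ε := by
          calc dist y 0 ≤ dist y (c₁ z) + dist (c₁ z) 0 := dist_triangle _ _ _
          _ < ε + ε := add_lt_add (by rw [Metric.mem_ball] at hv; rwa [dist_comm] at hv) h1
          _ = 2 * ε := by ring
        have : dist y 0 < dist y 0 := lt_of_lt_of_le this (by
          rw [hε]; have := min_le_left (dist y 0) (dist y (-I)); linarith)
        exact lt_irrefl _ this
      · by_contra h
        push_neg at h
        have h1 : dist (c₁ z) (-I) < ε := hB z h.le
        have : dist y (-I) < 2 * ε := by
          calc dist y (-I) ≤ dist y (c₁ z) + dist (c₁ z) (-I) := dist_triangle _ _ _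
          _ < ε + ε := add_lt_add (by rw [Metric.mem_ball] at hv; rwa [dist_comm] at hv) h1
          _ = 2 * ε := by ring
        have : dist y (-I) < dist y (-I) := lt_of_lt_of_le this (by
          rw [hε]; have := min_le_right (dist y 0) (dist y (-I)); linarith)
        exact lt_irrefl _ this
    have hacc2 : AccPt y (𝓟 (Metric.ball y ε ∩ c₁ '' Z)) :=
      hacc.nhds_inter (Metric.ball_mem_nhds y hεpos)
    have hacc3 : AccPt y (𝓟 (c₁ '' (Z ∩ Set.Icc A B))) :=
      hacc2.mono (principal_mono.2 (by rw [Set.inter_comm]; exact hsub))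
    exact stmt15_finite_not_accPt ((hfin A B).image c₁) y hacc3
  -- closure points
  have hcl0 : (0 : ℝ) ∈ closure (c₁ '' Z) := by
    rw [not_bddBelow_iff] at hzb
    have hch : ∀ n : ℕ, ∃ z, z ∈ Z ∧ z < -(n : ℝ) := by
      intro n
      obtain ⟨z, hzZ, hz⟩ := hzb (-(n : ℝ))
      exact ⟨z, hzZ, hz⟩
    choose u hu hult using hch
    have hub : Tendsto u atTop atBot := by
      apply tendsto_atBot_mono (fun n => (hult n).le)
      exact tendsto_neg_atBot_iff.2 tendsto_natCast_atTop_atTop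
    refine mem_closure_of_tendsto (hbot.comp hub) (Eventually.of_forall fun n => ?_)
    exact ⟨u n, hu n, rfl⟩
  have hclI : -I ∈ closure (c₁ '' Z) := by
    rw [not_bddAbove_iff] at hza
    have hch : ∀ n : ℕ, ∃ z, z ∈ Z ∧ (n : ℝ) < z := by
      intro n
      obtain ⟨z, hzZ, hz⟩ := hza (n : ℝ)
      exact ⟨z, hzZ, hz⟩
    choose u hu hult using hch
    have hub : Tendsto u atTop atTop := by
      apply tendsto_atTop_mono (fun n => (hult n).le)
      exact tendsto_natCast_atTop_atTop
    refine mem_closure_of_tendsto (htop.comp hub) (Eventually.of_forall fun n => ?_)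
    exact ⟨u n, hu n, rfl⟩
  exact ⟨hanti, hmono, hbot, htop, hcrit, hnacc, hcl0, hclI⟩
end

section
/- For all x ∈ ℝ one has 0 < (2 + sin(e^{x²}))/(4(x² + 1)) ≤ 3/4, so that c₁(x) < c₂(x) for all x; the functions c₁ and c₂ are bounded; and for every p ∈ ℝ every connected component of the set {x ∈ ℝ : c₁(x) ≤ p ≤ c₂(x)} is compact. -/
open Set Real

/-!
Every interval of length `2π` contains a point where `sin = 1`, at which `c₁ > 1`, and one where
`sin = -1`, at which `c₂ = 0`; so for any level `p` the closed band `{c₁ ≤ p ≤ c₂}` contains no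
half-line, and its connected components, being closed intervals, are bounded.
-/

theorem isClosed_connectedComponentIn {X : Type*} [TopologicalSpace X] {S : Set X}
    (hS : IsClosed S) (x : X) : IsClosed (connectedComponentIn S x) := by
  by_cases hx : x ∈ S
  · refine isClosed_of_closure_subset ?_
    exact isPreconnected_connectedComponentIn.closure.subset_connectedComponentIn
      (subset_closure (mem_connectedComponentIn hx))
      (closure_minimal (connectedComponentIn_subset S x) hS)
  · simp [connectedComponentIn_eq_empty hx]

section Order

variable {α : Type*} [LinearOrder α] [Nonempty α]

theorem Set.OrdConnected.bddAbove_of_subset {C S : Set α} (hC : C.OrdConnected) (hCS : C ⊆ S)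
    (hS : ∀ a, ∃ b ≥ a, b ∉ S) : BddAbove C := by
  by_contra hC'
  obtain ⟨a, haC⟩ := nonempty_of_not_bddAbove hC'
  obtain ⟨b, hab, hbS⟩ := hS a
  obtain ⟨y, hyC, hby⟩ := not_bddAbove_iff.mp hC' b
  exact hbS (hCS (hC.out haC hyC ⟨hab, hby.le⟩))

theorem Set.OrdConnected.bddBelow_of_subset {C S : Set α} (hC : C.OrdConnected) (hCS : C ⊆ S)
    (hS : ∀ a, ∃ b ≤ a, b ∉ S) : BddBelow C :=
  hC.dual.bddAbove_of_subset (α := αᵒᵈ) hCS hS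

end Order

theorem IsClosed.isCompact_connectedComponentIn {α : Type*} [ConditionallyCompleteLinearOrder α]
    [TopologicalSpace α] [OrderTopology α] {S : Set α}
    (hS : IsClosed S) (hAbove : ∀ a, ∃ b ≥ a, b ∉ S) (hBelow : ∀ a, ∃ b ≤ a, b ∉ S) (x : α) :
    IsCompact (connectedComponentIn S x) := by
  have : Nonempty α := ⟨x⟩
  have hC := (isPreconnected_connectedComponentIn (F := S) (x := x)).ordConnected
  have hCS := connectedComponentIn_subset S x
  obtain ⟨m, hm⟩ := hC.bddBelow_of_subset hCS hBelow
  obtain ⟨M, hM⟩ := hC.bddAbove_of_subset hCS hAbove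
  exact isCompact_Icc.of_isClosed_subset (isClosed_connectedComponentIn hS x)
    fun y hy => ⟨hm hy, hM hy⟩

theorem two_add_sin_div_pos (y x : ℝ) : 0 < (2 + sin y) / (4 * (x ^ 2 + 1)) := by
  have := neg_one_le_sin y
  exact div_pos (by linarith) (by positivity)

theorem two_add_sin_div_le (y x : ℝ) : (2 + sin y) / (4 * (x ^ 2 + 1)) ≤ 3 / 4 := by
  have := sin_le_one y
  rw [div_le_iff₀ (by positivity)]
  nlinarith [sq_nonneg x]

theorem exists_mem_Icc_notMem_sin_band {f : ℝ → ℝ} (hf : ∀ x, 0 < f x) (p a : ℝ) :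
    ∃ b ∈ Icc a (a + 2 * π), b ∉ {x | sin x + f x ≤ p ∧ p ≤ sin x + 1} := by
  simp only [mem_ofPred_eq, not_and_or, not_le]
  rcases le_or_gt p 1 with hp | hp
  · obtain ⟨b, hb, hsin⟩ := Real.sin_periodic.exists_mem_Ico two_pi_pos (π / 2) a
    refine ⟨b, Ico_subset_Icc_self hb, Or.inl ?_⟩
    rw [← hsin, sin_pi_div_two]
    linarith [hf b]
  · obtain ⟨b, hb, hsin⟩ := Real.sin_periodic.exists_mem_Ico two_pi_pos (-(π / 2)) a
    refine ⟨b, Ico_subset_Icc_self hb, Or.inr ?_⟩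
    rw [← hsin, sin_neg, sin_pi_div_two]
    linarith

/-- With `c₁(x) = sin x + (2 + sin(e^{x²}))/(4(x² + 1))` and
`c₂(x) = sin x + 1`: for all `x`, `0 < (2 + sin(e^{x²}))/(4(x² + 1)) ≤ 3/4`, so that
`c₁ < c₂` everywhere; `c₁` and `c₂` are bounded; and for every `p ∈ ℝ` every connected
component of `{x | c₁(x) ≤ p ≤ c₂(x)}` is compact. -/
theorem stmt16 (c₁ c₂ : ℝ → ℝ)
    (hc₁ : ∀ x : ℝ, c₁ x = Real.sin x +
      (2 + Real.sin (Real.exp (x ^ 2))) / (4 * (x ^ 2 + 1)))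
    (hc₂ : ∀ x : ℝ, c₂ x = Real.sin x + 1) :
    (∀ x : ℝ, 0 < (2 + Real.sin (Real.exp (x ^ 2))) / (4 * (x ^ 2 + 1)) ∧
      (2 + Real.sin (Real.exp (x ^ 2))) / (4 * (x ^ 2 + 1)) ≤ 3 / 4) ∧
    (∀ x : ℝ, c₁ x < c₂ x) ∧
    (∃ M : ℝ, ∀ x : ℝ, |c₁ x| ≤ M ∧ |c₂ x| ≤ M) ∧
    (∀ p : ℝ, ∀ x ∈ {x : ℝ | c₁ x ≤ p ∧ p ≤ c₂ x},
      IsCompact (connectedComponentIn {x : ℝ | c₁ x ≤ p ∧ p ≤ c₂ x} x)) := by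
  have hgap x :=
    And.intro (two_add_sin_div_pos (exp (x ^ 2)) x) (two_add_sin_div_le (exp (x ^ 2)) x)
  refine ⟨hgap, fun x => ?_, ⟨2, fun x => ?_⟩, fun p x _ => ?_⟩
  · rw [hc₁, hc₂]
    linarith [(hgap x).2]
  · rw [hc₁, hc₂, abs_le, abs_le]
    have := neg_one_le_sin x
    have := sin_le_one x
    constructor <;> constructor <;> linarith [hgap x]
  have hc₁_cont : Continuous c₁ := by
    rw [funext hc₁]
    fun_prop (disch := intro; positivity)
  have hc₂_cont : Continuous c₂ := by
    rw [funext hc₂]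
    fun_prop
  have hS : IsClosed {x | c₁ x ≤ p ∧ p ≤ c₂ x} :=
    (isClosed_le hc₁_cont continuous_const).inter (isClosed_le continuous_const hc₂_cont)
  obtain rfl := funext hc₁
  obtain rfl := funext hc₂
  refine hS.isCompact_connectedComponentIn (fun a => ?_) (fun a => ?_) x
  · obtain ⟨b, hb, hbS⟩ := exists_mem_Icc_notMem_sin_band (fun x => (hgap x).1) p a
    exact ⟨b, hb.1, hbS⟩
  · obtain ⟨b, hb, hbS⟩ := exists_mem_Icc_notMem_sin_band (fun x => (hgap x).1) p (a - 2 * π)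
    exact ⟨b, by linarith [hb.2], hbS⟩
end

section
/- There exist sequences (a_j), (b_j) of real numbers tending to +∞ and sequences (a′_j), (b′_j) tending to −∞ such that c₁′(a_j) → +∞, c₁′(b_j) → −∞, c₁′(a′_j) → +∞, and c₁′(b′_j) → −∞ as j → ∞. -/
/-!
Differentiating, `c₁′(x) = cos(e^{x²}) · x e^{x²} / (2(x² + 1)) + O(1)`, with the error bounded
by `3`. The amplitude `x e^{x²} / (2(x² + 1))` is odd and at least `x / 2` for `x ≥ 0`, since
`e^{x²} ≥ x² + 1`. Taking `x = ±√(log v)` with `v ∈ 2πℕ` (where `cos v = 1`) or `v ∈ π + 2πℕ`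
(where `cos v = -1`) gives the four sequences.
-/

open Filter Real

noncomputable def sinAddChirp (x : ℝ) : ℝ := sin x + (2 + sin (exp (x ^ 2))) / (4 * (x ^ 2 + 1))

noncomputable def chirpAmp (x : ℝ) : ℝ := x * exp (x ^ 2) / (2 * (x ^ 2 + 1))

lemma chirpAmp_neg (x : ℝ) : chirpAmp (-x) = -chirpAmp x := by
  simp only [chirpAmp, neg_sq]
  ring

lemma half_le_chirpAmp {x : ℝ} (hx : 0 ≤ x) : x / 2 ≤ chirpAmp x := by
  rw [chirpAmp, le_div_iff₀ (by positivity)]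
  nlinarith [add_one_le_exp (x ^ 2)]

lemma tendsto_chirpAmp_atTop : Tendsto chirpAmp atTop atTop :=
  tendsto_atTop_mono' atTop ((eventually_ge_atTop 0).mono fun _ => half_le_chirpAmp)
    (tendsto_id.atTop_div_const two_pos)

lemma hasDerivAt_sinAddChirp (x : ℝ) :
    HasDerivAt sinAddChirp (cos x + cos (exp (x ^ 2)) * chirpAmp x
      - x * (2 + sin (exp (x ^ 2))) / (2 * (x ^ 2 + 1) ^ 2)) x := by
  have hsq : HasDerivAt (fun y : ℝ => y ^ 2) (2 * x) x := by simpa using hasDerivAt_pow 2 x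
  have hnum := (hsq.exp.sin).const_add 2
  have hden := (hsq.add_const 1).const_mul 4
  refine ((hasDerivAt_sin x).add (hnum.div hden (by positivity))).congr_deriv ?_
  unfold chirpAmp
  field_simp
  ring

lemma abs_deriv_sinAddChirp_sub_le (x : ℝ) :
    |deriv sinAddChirp x - cos (exp (x ^ 2)) * chirpAmp x| ≤ 3 := by
  rw [(hasDerivAt_sinAddChirp x).deriv, add_sub_right_comm, add_sub_cancel_right]
  have hcos := abs_cos_le_one x
  have hsin := abs_sin_le_one (exp (x ^ 2))
  have hx : |x| ≤ x ^ 2 + 1 := by nlinarith [sq_abs x, sq_nonneg (|x| - 1)]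
  have hrem : |x * (2 + sin (exp (x ^ 2))) / (2 * (x ^ 2 + 1) ^ 2)| ≤ 2 := by
    rw [abs_div, abs_mul, abs_of_pos (by positivity : (0 : ℝ) < 2 * (x ^ 2 + 1) ^ 2),
      div_le_iff₀ (by positivity)]
    have h3 : |2 + sin (exp (x ^ 2))| ≤ 3 := by
      rw [abs_le] at hsin ⊢
      constructor <;> linarith
    nlinarith [abs_nonneg x, abs_nonneg (2 + sin (exp (x ^ 2)))]
  calc _ ≤ |cos x| + |x * (2 + sin (exp (x ^ 2))) / (2 * (x ^ 2 + 1) ^ 2)| := abs_sub _ _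
    _ ≤ 3 := by linarith

section

variable {α : Type*} {l : Filter α} {u w : α → ℝ} {C : ℝ}

lemma tendsto_atTop_of_abs_sub_le (hu : Tendsto u l atTop) (h : ∀ a, |w a - u a| ≤ C) :
    Tendsto w l atTop := by
  simpa using tendsto_atTop_add_right_of_le l (-C) hu fun a => (abs_le.1 (h a)).1

lemma tendsto_atBot_of_abs_sub_le (hu : Tendsto u l atBot) (h : ∀ a, |w a - u a| ≤ C) :
    Tendsto w l atBot := by
  simpa using tendsto_atBot_add_right_of_ge l C hu fun a => (abs_le.1 (h a)).2

end

lemma exists_tendsto_atTop_cos_exp_sq_eq {θ : ℝ} (hθ : 0 ≤ θ) :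
    ∃ x : ℕ → ℝ, Tendsto x atTop atTop ∧ ∀ j, cos (exp (x j ^ 2)) = cos θ := by
  set v : ℕ → ℝ := fun j => θ + (j + 1 : ℕ) * (2 * π)
  have hv : ∀ j, 1 ≤ v j := fun j => by
    have : (1 : ℝ) ≤ (j + 1 : ℕ) := by exact_mod_cast j.succ_pos
    nlinarith [pi_gt_three]
  refine ⟨fun j => √(log (v j)), ?_, fun j => ?_⟩
  · refine tendsto_sqrt_atTop.comp (tendsto_log_atTop.comp ?_)
    exact tendsto_atTop_add_const_left _ θ <| (tendsto_natCast_atTop_atTop.comp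
      (tendsto_add_atTop_nat 1)).atTop_mul_const (by positivity)
  · rw [sq_sqrt (log_nonneg (hv j)), exp_log (by linarith [hv j]), cos_add_nat_mul_two_pi]

/-- With `c₁(x) = sin x + (2 + sin(e^{x²}))/(4(x² + 1))`, there exist
sequences `(a_j), (b_j)` tending to `+∞` and `(a′_j), (b′_j)` tending to `−∞` such that
`c₁′(a_j) → +∞`, `c₁′(b_j) → −∞`, `c₁′(a′_j) → +∞`, and `c₁′(b′_j) → −∞`. -/
theorem stmt17 (c₁ : ℝ → ℝ)
    (hc₁ : ∀ x : ℝ, c₁ x = Real.sin x +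
      (2 + Real.sin (Real.exp (x ^ 2))) / (4 * (x ^ 2 + 1))) :
    ∃ a b a' b' : ℕ → ℝ,
      Tendsto a atTop atTop ∧ Tendsto b atTop atTop ∧
      Tendsto a' atTop atBot ∧ Tendsto b' atTop atBot ∧
      Tendsto (fun j => deriv c₁ (a j)) atTop atTop ∧
      Tendsto (fun j => deriv c₁ (b j)) atTop atBot ∧
      Tendsto (fun j => deriv c₁ (a' j)) atTop atTop ∧
      Tendsto (fun j => deriv c₁ (b' j)) atTop atBot := by
  obtain rfl : c₁ = sinAddChirp := funext hc₁
  obtain ⟨x, hx, hcx⟩ := exists_tendsto_atTop_cos_exp_sq_eq le_rfl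
  obtain ⟨y, hy, hcy⟩ := exists_tendsto_atTop_cos_exp_sq_eq pi_pos.le
  have hAx := tendsto_chirpAmp_atTop.comp hx
  have hAy := tendsto_chirpAmp_atTop.comp hy
  refine ⟨x, y, -y, -x, hx, hy, tendsto_neg_atTop_atBot.comp hy,
    tendsto_neg_atTop_atBot.comp hx, ?_, ?_, ?_, ?_⟩
  · refine tendsto_atTop_of_abs_sub_le (C := 3) hAx fun j => ?_
    simpa [hcx j] using abs_deriv_sinAddChirp_sub_le (x j)
  · refine tendsto_atBot_of_abs_sub_le (C := 3) (tendsto_neg_atTop_atBot.comp hAy) fun j => ?_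
    simpa [hcy j] using abs_deriv_sinAddChirp_sub_le (y j)
  · refine tendsto_atTop_of_abs_sub_le (C := 3) hAy fun j => ?_
    simpa [hcy j, chirpAmp_neg] using abs_deriv_sinAddChirp_sub_le (-y j)
  · refine tendsto_atBot_of_abs_sub_le (C := 3) (tendsto_neg_atTop_atBot.comp hAx) fun j => ?_
    simpa [hcx j, chirpAmp_neg] using abs_deriv_sinAddChirp_sub_le (-x j)
end
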